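/- arXiv:0904.0047 — 8 statements merged into one kernel-verified Lean document; each statement's English description precedes it below -/
import Mathlib

section
/- Let G be a group with a finite symmetric generating set K and balls B_n, and suppose G has subexponential growth, i.e. lim_{n→∞} (log |B_n|)/n = 0. Then there exists a strictly increasing sequence of indices (n_k) such that for every g ∈ G, |g·B_{n_k} △ B_{n_k}| / |B_{n_k}| → 0 as k → ∞; in particular the balls contain a Følner subsequence and G admits a Følner sequence. -/
/-!
Write `a n = |B_n|`. For a generator `x`, `x B_n ⊆ B_{n+1}` and `|x B_n| = |B_n|`, so
`|x B_n △ B_n| = 2 |x B_n \ B_n| ≤ 2 (a (n+1) - a n)`. Subexponential growth means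
`log a n = o(n)`, which forces the increments `log a (n+1) - log a n` to be arbitrarily small
infinitely often; along such indices `a (n+1) / a n → 1` and every generator moves the balls by a
vanishing proportion. The elements `g` with `|g A_k △ A_k| / |A_k| → 0` form a subgroup, which
therefore contains `⟨K⟩ = G`.
-/

open Filter Topology Pointwise

/-- The ball of radius `n` in a group `G` with respect to a generating set `K`:
the set of all elements expressible as a product of at most `n` elements of `K`. -/
def wordBall {G : Type*} [Group G] (K : Finset G) (n : ℕ) : Set G :=
  {g | ∃ l : List G, l.length ≤ n ∧ (∀ x ∈ l, x ∈ K) ∧ l.prod = g}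

section Increments

lemma frequently_succ_sub_lt_of_tendsto_div {c : ℕ → ℝ}
    (hc : Tendsto (fun n : ℕ => c n / n) atTop (𝓝 0)) {δ : ℝ} (hδ : 0 < δ) :
    ∃ᶠ n in atTop, c (n + 1) - c n < δ := by
  by_contra h
  obtain ⟨N, hN⟩ := eventually_atTop.mp (not_frequently.mp h)
  have hlin : ∀ n ≥ N, c N + (n - N) * δ ≤ c n := by
    intro n hn
    induction n, hn using Nat.le_induction with
    | base => simp
    | succ n hn ih => push_cast; linarith [hN n hn]
  have hlower : Tendsto (fun n : ℕ => δ + (c N - N * δ) / n) atTop (𝓝 δ) := by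
    simpa using tendsto_const_nhds.add (tendsto_const_div_atTop_nhds_zero_nat (c N - N * δ))
  have hδ_nonpos : δ ≤ 0 := le_of_tendsto_of_tendsto hlower hc <| by
    filter_upwards [eventually_ge_atTop N, eventually_gt_atTop 0] with n hn hn0
    have hn0 : (0 : ℝ) < n := by exact_mod_cast hn0
    rw [← sub_nonneg]
    have := hlin n hn
    field_simp
    linarith
  linarith

lemma exists_strictMono_tendsto_succ_sub_of_tendsto_div {c : ℕ → ℝ} (hmono : Monotone c)
    (hc : Tendsto (fun n : ℕ => c n / n) atTop (𝓝 0)) :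
    ∃ φ : ℕ → ℕ, StrictMono φ ∧ Tendsto (fun k => c (φ k + 1) - c (φ k)) atTop (𝓝 0) := by
  obtain ⟨φ, hφ, hlt⟩ := extraction_forall_of_frequently fun k : ℕ =>
    frequently_succ_sub_lt_of_tendsto_div hc (Nat.one_div_pos_of_nat (n := k))
  refine ⟨φ, hφ, squeeze_zero (fun k => sub_nonneg.mpr (hmono (φ k).le_succ))
    (fun k => (hlt k).le) tendsto_one_div_add_atTop_nhds_zero_nat⟩

lemma exists_strictMono_tendsto_succ_div_of_tendsto_log_div {a : ℕ → ℝ} (hpos : ∀ n, 0 < a n)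
    (hmono : Monotone a) (ha : Tendsto (fun n : ℕ => Real.log (a n) / n) atTop (𝓝 0)) :
    ∃ φ : ℕ → ℕ, StrictMono φ ∧ Tendsto (fun k => a (φ k + 1) / a (φ k)) atTop (𝓝 1) := by
  obtain ⟨φ, hφ, hlog⟩ := exists_strictMono_tendsto_succ_sub_of_tendsto_div
    (fun m n h => Real.log_le_log (hpos m) (hmono h)) ha
  refine ⟨φ, hφ, ?_⟩
  have hexp := (Real.continuous_exp.tendsto 0).comp hlog
  simp only [Real.exp_zero] at hexp
  refine hexp.congr fun k => ?_
  simp [Function.comp, Real.exp_sub, Real.exp_log (hpos _)]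

end Increments

section FolnerRatio

variable {G : Type*} [Group G]

lemma Set.ncard_smul_set_symmDiff_self {A : Set G} (hA : A.Finite) (g : G) :
    (symmDiff (g • A) A).ncard = 2 * (g • A \ A).ncard := by
  have hcomm : (g • A \ A).ncard = (A \ g • A).ncard :=
    (Set.ncard_eq_ncard_iff_ncard_sdiff_eq_ncard_sdiff hA.smul_set hA).mp (Set.ncard_smul_set g A)
  rw [Set.symmDiff_def, Set.ncard_union_eq disjoint_sdiff_sdiff hA.smul_set.sdiff hA.sdiff,
    ← hcomm, two_mul]

-- For infinite `A` both cardinalities are the junk value `0`, and so is the ratio.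
noncomputable def folnerRatio (A : Set G) (g : G) : ℝ :=
  ((symmDiff (g • A) A).ncard : ℝ) / A.ncard

lemma folnerRatio_nonneg (A : Set G) (g : G) : 0 ≤ folnerRatio A g := by
  unfold folnerRatio; positivity

@[simp]
lemma folnerRatio_one (A : Set G) : folnerRatio A 1 = 0 := by
  simp [folnerRatio]

@[simp]
lemma folnerRatio_inv (A : Set G) (g : G) : folnerRatio A g⁻¹ = folnerRatio A g := by
  rw [folnerRatio, folnerRatio, ← Set.ncard_smul_set g, Set.smul_set_symmDiff, smul_inv_smul,
    symmDiff_comm]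

lemma folnerRatio_mul_le (A : Set G) (g h : G) :
    folnerRatio A (g * h) ≤ folnerRatio A g + folnerRatio A h := by
  rcases A.finite_or_infinite with hA | hA
  · have htriangle : symmDiff ((g * h) • A) A
        ⊆ symmDiff ((g * h) • A) (g • A) ∪ symmDiff (g • A) A := symmDiff_triangle _ _ _
    have hfin : (symmDiff ((g * h) • A) (g • A) ∪ symmDiff (g • A) A).Finite :=
      (hA.smul_set.symmDiff hA.smul_set).union (hA.smul_set.symmDiff hA)
    have hshift : (symmDiff ((g * h) • A) (g • A)).ncard = (symmDiff (h • A) A).ncard := by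
      rw [mul_smul, ← Set.smul_set_symmDiff, Set.ncard_smul_set]
    have hcard : ((symmDiff ((g * h) • A) A).ncard : ℝ)
        ≤ (symmDiff (g • A) A).ncard + (symmDiff (h • A) A).ncard := by
      have := (Set.ncard_le_ncard htriangle hfin).trans (Set.ncard_union_le _ _)
      rw [hshift] at this
      exact_mod_cast this.trans_eq (add_comm _ _)
    rw [folnerRatio, folnerRatio, folnerRatio, ← add_div]
    gcongr
  · simp [folnerRatio, hA.ncard]

def asymptoticStabilizer (A : ℕ → Set G) : Subgroup G where
  carrier := {g | Tendsto (fun k => folnerRatio (A k) g) atTop (𝓝 0)}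
  one_mem' := by simp
  mul_mem' {g h} hg hh := squeeze_zero (fun k => folnerRatio_nonneg _ _)
    (fun k => folnerRatio_mul_le (A k) g h) (by simpa using hg.add hh)
  inv_mem' {g} hg := by simpa using hg

end FolnerRatio

section WordBall

variable {G : Type*} [Group G] (K : Finset G)

lemma one_mem_wordBall (n : ℕ) : (1 : G) ∈ wordBall K n :=
  ⟨[], by simp, by simp, by simp⟩

lemma wordBall_nonempty (n : ℕ) : (wordBall K n).Nonempty :=
  ⟨1, one_mem_wordBall K n⟩

lemma wordBall_mono : Monotone (wordBall K) :=
  fun _ _ h _ ⟨l, hl, hK, hp⟩ => ⟨l, hl.trans h, hK, hp⟩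

lemma smul_wordBall_subset {x : G} (hx : x ∈ K) (n : ℕ) :
    x • wordBall K n ⊆ wordBall K (n + 1) := by
  rintro - ⟨g, ⟨l, hl, hK, rfl⟩, rfl⟩
  refine ⟨x :: l, by simpa using hl, ?_, by simp⟩
  simpa [hx] using hK

lemma wordBall_succ_subset (n : ℕ) :
    wordBall K (n + 1) ⊆ insert 1 (K : Set G) * wordBall K n := by
  rintro g ⟨l, hl, hK, rfl⟩
  cases l with
  | nil => exact ⟨1, by simp, 1, one_mem_wordBall K n, by simp⟩
  | cons x t =>
    refine ⟨x, Or.inr (hK x (by simp)), t.prod, ⟨t, ?_, fun y hy => hK y (by simp [hy]), rfl⟩, rfl⟩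
    simpa using hl

lemma wordBall_finite (n : ℕ) : (wordBall K n).Finite := by
  induction n with
  | zero =>
    refine (Set.finite_singleton (1 : G)).subset ?_
    rintro g ⟨l, hl, -, rfl⟩
    simp [List.length_eq_zero_iff.mp (Nat.le_zero.mp hl)]
  | succ n ih =>
    exact (((K.finite_toSet).insert 1).mul ih).subset (wordBall_succ_subset K n)

lemma ncard_wordBall_pos (n : ℕ) : 0 < (wordBall K n).ncard :=
  (Set.ncard_pos (wordBall_finite K n)).mpr (wordBall_nonempty K n)

lemma folnerRatio_wordBall_le {x : G} (hx : x ∈ K) (n : ℕ) :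
    folnerRatio (wordBall K n) x
      ≤ 2 * ((wordBall K (n + 1)).ncard / (wordBall K n).ncard - 1) := by
  have hpos : (0 : ℝ) < (wordBall K n).ncard := by exact_mod_cast ncard_wordBall_pos K n
  have hleak : ((x • wordBall K n \ wordBall K n).ncard : ℝ)
      ≤ (wordBall K (n + 1)).ncard - (wordBall K n).ncard := by
    rw [← Set.cast_ncard_sdiff (wordBall_mono K n.le_succ) (wordBall_finite K (n + 1))]
    exact_mod_cast Set.ncard_le_ncard (Set.sdiff_subset_sdiff_left (smul_wordBall_subset K hx n))
      (wordBall_finite K (n + 1)).sdiff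
  rw [folnerRatio, Set.ncard_smul_set_symmDiff_self (wordBall_finite K n), div_le_iff₀ hpos]
  push_cast
  rw [mul_assoc, sub_mul, one_mul, div_mul_cancel₀ _ hpos.ne']
  linarith

lemma mem_asymptoticStabilizer_wordBall {φ : ℕ → ℕ}
    (hφ : Tendsto (fun k => ((wordBall K (φ k + 1)).ncard : ℝ) / (wordBall K (φ k)).ncard)
      atTop (𝓝 1)) {x : G} (hx : x ∈ K) :
    x ∈ asymptoticStabilizer fun k => wordBall K (φ k) := by
  have hbound : Tendsto (fun k =>
      2 * (((wordBall K (φ k + 1)).ncard : ℝ) / (wordBall K (φ k)).ncard - 1)) atTop (𝓝 0) := by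
    simpa using (hφ.sub_const 1).const_mul 2
  exact squeeze_zero (fun k => folnerRatio_nonneg _ _)
    (fun k => folnerRatio_wordBall_le K hx (φ k)) hbound

end WordBall

theorem subexponential_growth_gives_folner_subsequence_general
    {G : Type*} [Group G] (K : Finset G)
    (hgen : Subgroup.closure (K : Set G) = ⊤)
    (hsub : Tendsto (fun n : ℕ => Real.log ((wordBall K n).ncard) / n) atTop (𝓝 0)) :
    ∃ nk : ℕ → ℕ, StrictMono nk ∧
      (∀ k, (wordBall K (nk k)).Finite ∧ (wordBall K (nk k)).Nonempty) ∧
      ∀ g : G,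
        Tendsto
          (fun k =>
            ((symmDiff (g • wordBall K (nk k)) (wordBall K (nk k))).ncard : ℝ) /
              ((wordBall K (nk k)).ncard : ℝ))
          atTop (𝓝 0) := by
  obtain ⟨φ, hφ, hratio⟩ := exists_strictMono_tendsto_succ_div_of_tendsto_log_div
    (fun n => by exact_mod_cast ncard_wordBall_pos K n)
    (fun m n h => by exact_mod_cast Set.ncard_le_ncard (wordBall_mono K h) (wordBall_finite K n))
    hsub
  have hK : (K : Set G) ⊆ asymptoticStabilizer fun k => wordBall K (φ k) :=
    fun x hx => mem_asymptoticStabilizer_wordBall K hratio hx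
  refine ⟨φ, hφ, fun k => ⟨wordBall_finite K _, wordBall_nonempty K _⟩, fun g => ?_⟩
  exact (Subgroup.closure_le _).mpr hK (hgen ▸ Subgroup.mem_top g)

/-- If a group of subexponential growth, then the balls contain a Følner subsequence:
there is a strictly increasing sequence of indices `n_k` such that
`|g B_{n_k} ∆ B_{n_k}| / |B_{n_k}| → 0` for every `g ∈ G`. -/
theorem subexponential_growth_gives_folner_subsequence
    {G : Type*} [Group G] (K : Finset G)
    (hsym : ∀ k ∈ K, k⁻¹ ∈ K)
    (hgen : Subgroup.closure (K : Set G) = ⊤)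
    (hsub : Tendsto (fun n : ℕ => Real.log ((wordBall K n).ncard) / n) atTop (𝓝 0)) :
    ∃ nk : ℕ → ℕ, StrictMono nk ∧
      (∀ k, (wordBall K (nk k)).Finite ∧ (wordBall K (nk k)).Nonempty) ∧
      ∀ g : G,
        Tendsto
          (fun k =>
            ((symmDiff (g • wordBall K (nk k)) (wordBall K (nk k))).ncard : ℝ) /
              ((wordBall K (nk k)).ncard : ℝ))
          atTop (𝓝 0) :=
  subexponential_growth_gives_folner_subsequence_general K hgen hsub
end

section
/- If a countable discrete group G satisfies Reiter's condition, then G admits a left-invariant mean: there exists a linear functional m on the space ℓ∞(G) of bounded real-valued functions on G such that m(1) = 1, m(f) ≥ 0 whenever f ≥ 0, and m(g·f) = m(f) for all g ∈ G and f ∈ ℓ∞(G), where (g·f)(h) = f(g⁻¹h). -/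
/-!
Pairing a bounded `f` with `λ_n` gives means `Φ_n f = ∑ λ_n(h) f(h)` on `ℓ∞(G)`, and
`|Φ_n (g·f) - Φ_n f| ≤ ‖g⁻¹λ_n - λ_n‖ ‖f‖∞`, so they are asymptotically invariant. Since
`|Φ_n f| ≤ ‖f‖∞`, each sequence `Φ_n f` converges along an ultrafilter on `ℕ` finer than `atTop`;
the pointwise limit is a linear functional, positive and normalised like the `Φ_n`, and invariant
because Reiter's condition holds along `atTop`.
-/

open Filter Topology

/-- A probability measure on a countable discrete group `G`:
a nonnegative function summing to `1`. -/
def IsProbMeasure {G : Type*} (μ : G → ℝ) : Prop :=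
  (∀ g, 0 ≤ μ g) ∧ HasSum μ 1

/-- Reiter's condition: there is a sequence of probability measures `λ_n` on `G` with
`‖g λ_n − λ_n‖ → 0` for every `g ∈ G` (ℓ¹ norm). -/
def ReiterCondition (G : Type*) [Group G] : Prop :=
  ∃ lam : ℕ → G → ℝ, (∀ n, IsProbMeasure (lam n)) ∧
    ∀ g : G, Tendsto (fun n => ∑' h, |lam n (g⁻¹ * h) - lam n h|) atTop (𝓝 0)

/-- The space `ℓ∞(G)` of bounded real-valued functions on `G`, as a submodule of `G → ℝ`. -/
def boundedFunctions (G : Type*) : Submodule ℝ (G → ℝ) where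
  carrier := {f | ∃ C : ℝ, ∀ x, |f x| ≤ C}
  add_mem' := by
    rintro f g ⟨C, hC⟩ ⟨D, hD⟩
    exact ⟨C + D, fun x => (abs_add_le _ _).trans (add_le_add (hC x) (hD x))⟩
  zero_mem' := ⟨0, fun x => by simp⟩
  smul_mem' := by
    rintro c f ⟨C, hC⟩
    exact ⟨|c| * C, fun x => by
      simpa [abs_mul] using mul_le_mul_of_nonneg_left (hC x) (abs_nonneg c)⟩

section

variable {G : Type*}

theorem summable_mul_of_abs_le {μ f : G → ℝ} (hμ : Summable μ) {C : ℝ}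
    (hf : ∀ x, |f x| ≤ C) : Summable fun h => μ h * f h :=
  (hμ.abs.mul_right C).of_norm_bounded fun h => by
    rw [Real.norm_eq_abs, abs_mul]
    exact mul_le_mul_of_nonneg_left (hf h) (abs_nonneg _)

theorem abs_tsum_mul_le {μ f : G → ℝ} (hμ : Summable μ) {C : ℝ} (hf : ∀ x, |f x| ≤ C) :
    |∑' h, μ h * f h| ≤ (∑' h, |μ h|) * C :=
  tsum_of_norm_bounded (hμ.abs.hasSum.mul_right C) fun h => by
    rw [Real.norm_eq_abs, abs_mul]
    exact mul_le_mul_of_nonneg_left (hf h) (abs_nonneg _)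

theorem Ultrafilter.exists_tendsto_of_abs_le {α : Type*} (U : Ultrafilter α) {u : α → ℝ}
    {C : ℝ} (hu : ∀ a, |u a| ≤ C) : ∃ L, Tendsto u U (𝓝 L) := by
  have hU : ↑(U.map u) ≤ 𝓟 (Set.Icc (-C) C) :=
    le_principal_iff.2 <| mem_map.2 <| univ_mem' fun a => abs_le.1 (hu a)
  obtain ⟨L, -, hL⟩ := isCompact_Icc.ultrafilter_le_nhds (U.map u) hU
  exact ⟨L, hL⟩

namespace boundedFunctions

theorem exists_abs_le (f : boundedFunctions G) : ∃ C, ∀ x, |(f : G → ℝ) x| ≤ C := f.2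

noncomputable def weightedSum {μ : G → ℝ} (hμ : Summable μ) : boundedFunctions G →ₗ[ℝ] ℝ where
  toFun f := ∑' h, μ h * (f : G → ℝ) h
  map_add' f f' := by
    obtain ⟨C, hC⟩ := exists_abs_le f
    obtain ⟨C', hC'⟩ := exists_abs_le f'
    simp only [Submodule.coe_add, Pi.add_apply, mul_add]
    exact (summable_mul_of_abs_le hμ hC).tsum_add (summable_mul_of_abs_le hμ hC')
  map_smul' c f := by
    simp only [Submodule.coe_smul, Pi.smul_apply, smul_eq_mul, mul_left_comm _ c,
      tsum_mul_left, RingHom.id_apply]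

variable {μ : G → ℝ}

theorem weightedSum_apply (hμ : Summable μ) (f : boundedFunctions G) :
    weightedSum hμ f = ∑' h, μ h * (f : G → ℝ) h := rfl

section IsProbMeasure

variable (hμ : IsProbMeasure μ) {f : boundedFunctions G}
include hμ

theorem abs_weightedSum_le {C : ℝ} (hf : ∀ x, |(f : G → ℝ) x| ≤ C) :
    |weightedSum hμ.2.summable f| ≤ C := by
  have hμ_abs : (fun h => |μ h|) = μ := funext fun h => abs_of_nonneg (hμ.1 h)
  simpa [weightedSum_apply, hμ_abs, hμ.2.tsum_eq] using abs_tsum_mul_le hμ.2.summable hf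

theorem weightedSum_nonneg (hf : ∀ x, 0 ≤ (f : G → ℝ) x) : 0 ≤ weightedSum hμ.2.summable f :=
  tsum_nonneg fun h => mul_nonneg (hμ.1 h) (hf h)

theorem weightedSum_eq_one (hf : ∀ x, (f : G → ℝ) x = 1) : weightedSum hμ.2.summable f = 1 := by
  simpa [weightedSum_apply, hf] using hμ.2.tsum_eq

end IsProbMeasure

theorem abs_weightedSum_sub_weightedSum_le [Group G] (hμ : Summable μ) (g : G)
    {f f' : boundedFunctions G} (hff' : ∀ h, (f' : G → ℝ) h = (f : G → ℝ) (g⁻¹ * h)) {C : ℝ}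
    (hf : ∀ x, |(f : G → ℝ) x| ≤ C) :
    |weightedSum hμ f' - weightedSum hμ f| ≤ (∑' h, |μ (g * h) - μ h|) * C := by
  have hμg : Summable fun h => μ (g * h) := hμ.comp_injective (mul_right_injective g)
  have hf' : weightedSum hμ f' = ∑' h, μ (g * h) * (f : G → ℝ) h := by
    rw [weightedSum_apply, ← (Equiv.mulLeft g).tsum_eq]
    simp [hff']
  rw [hf', weightedSum_apply, ← (summable_mul_of_abs_le hμg hf).tsum_sub
    (summable_mul_of_abs_le hμ hf)]
  simpa only [sub_mul] using abs_tsum_mul_le (hμg.sub hμ) hf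

end boundedFunctions

end

open boundedFunctions in
theorem reiter_implies_invariant_mean_general {G : Type*} [Group G]
    (hReiter : ReiterCondition G) :
    ∃ m : boundedFunctions G →ₗ[ℝ] ℝ,
      (∀ f : boundedFunctions G, (∀ x, (f : G → ℝ) x = 1) → m f = 1) ∧
      (∀ f : boundedFunctions G, (∀ x, 0 ≤ (f : G → ℝ) x) → 0 ≤ m f) ∧
      (∀ (g : G) (f f' : boundedFunctions G),
        (∀ h, (f' : G → ℝ) h = (f : G → ℝ) (g⁻¹ * h)) → m f' = m f) := by
  obtain ⟨lam, hlam, hconv⟩ := hReiter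
  let U := Ultrafilter.of (atTop : Filter ℕ)
  let Φ n := weightedSum (hlam n).2.summable
  have hlim (f : boundedFunctions G) : ∃ L, Tendsto (Φ · f) U (𝓝 L) := by
    obtain ⟨C, hC⟩ := exists_abs_le f
    exact U.exists_tendsto_of_abs_le fun n => abs_weightedSum_le (hlam n) hC
  choose m hm using hlim
  refine ⟨linearMapOfTendsto m Φ (tendsto_pi_nhds.2 hm), fun f hf => ?_, fun f hf => ?_,
    fun g f f' hff' => ?_⟩
  · exact tendsto_nhds_unique (hm f) (by simp [Φ, weightedSum_eq_one (hlam _) hf])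
  · exact ge_of_tendsto (hm f) (Eventually.of_forall fun n => weightedSum_nonneg (hlam n) hf)
  · obtain ⟨C, hC⟩ := exists_abs_le f
    have hdiff : Tendsto (fun n => Φ n f' - Φ n f) atTop (𝓝 0) :=
      squeeze_zero_norm (fun n => abs_weightedSum_sub_weightedSum_le _ g hff' hC)
        (by simpa using (hconv g⁻¹).mul_const C)
    have hf' : Tendsto (Φ · f') U (𝓝 (m f)) := by
      simpa using (hdiff.mono_left (Ultrafilter.of_le atTop)).add (hm f)
    exact tendsto_nhds_unique (hm f') hf'

/-- If a countable discrete group satisfies Reiter's condition, then it admits a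
left-invariant mean on `ℓ∞(G)`: a positive normalized linear functional invariant under
left translations `(g·f)(h) = f(g⁻¹h)`. -/
theorem reiter_implies_invariant_mean {G : Type*} [Group G] [Countable G]
    (hReiter : ReiterCondition G) :
    ∃ m : boundedFunctions G →ₗ[ℝ] ℝ,
      (∀ f : boundedFunctions G, (∀ x, (f : G → ℝ) x = 1) → m f = 1) ∧
      (∀ f : boundedFunctions G, (∀ x, 0 ≤ (f : G → ℝ) x) → 0 ≤ m f) ∧
      (∀ (g : G) (f f' : boundedFunctions G),
        (∀ h, (f' : G → ℝ) h = (f : G → ℝ) (g⁻¹ * h)) → m f' = m f) :=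
  reiter_implies_invariant_mean_general hReiter
end

section
/- Let G be a countable discrete group satisfying Reiter's condition, and let G act by homeomorphisms on a nonempty compact metrizable topological space X. Then there exists a G-invariant Borel probability measure on X. -/
/-!
Push the Reiter measures `λₙ` forward along an orbit map `h ↦ h • x₀` to probability measures
`νₙ` on `X`. Translating by `g` moves `∫ f dνₙ` by at most `‖f‖ · ‖g λₙ − λₙ‖`, so the `νₙ` are
asymptotically invariant. Probability measures on a compact metrizable space form a compact
Hausdorff space for the weak topology, so `νₙ` converges to some `ν` along an ultrafilter; since
pushing forward by `g` is weakly continuous, `g_* ν` is the limit of `g_* νₙ`, which is also `ν`.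
-/

open Filter Topology MeasureTheory

open BoundedContinuousFunction

theorem abs_tsum_mul_sub_tsum_mul_le {ι : Type*} {w w' b : ι → ℝ} {C : ℝ} (hw : Summable w)
    (hw' : Summable w') (hb : ∀ i, |b i| ≤ C) :
    |∑' i, w i * b i - ∑' i, w' i * b i| ≤ C * ∑' i, |w i - w' i| := by
  have hbound : ∀ v : ι → ℝ, ∀ i, ‖v i * b i‖ ≤ |v i| * C := fun v i => by
    rw [Real.norm_eq_abs, abs_mul]; exact mul_le_mul_of_nonneg_left (hb i) (abs_nonneg _)
  have hsummable : ∀ {v : ι → ℝ}, Summable v → Summable fun i => v i * b i := fun hv =>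
    (hv.abs.mul_right C).of_norm_bounded (hbound _)
  have hdiff := hsummable (hw.sub hw')
  calc |∑' i, w i * b i - ∑' i, w' i * b i| = |∑' i, (w i - w' i) * b i| := by
        simp only [sub_mul, (hsummable hw).tsum_sub (hsummable hw')]
    _ ≤ ∑' i, ‖(w i - w' i) * b i‖ := norm_tsum_le_tsum_norm hdiff.norm
    _ ≤ ∑' i, |w i - w' i| * C :=
        hdiff.norm.tsum_le_tsum (hbound _) ((hw.sub hw').abs.mul_right C)
    _ = C * ∑' i, |w i - w' i| := by rw [tsum_mul_right, mul_comm]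

namespace MeasureTheory

section WeightedDiracSum

variable {ι X : Type*} [MeasurableSpace X]

noncomputable def weightedDiracSum (w : ι → ℝ) (p : ι → X) : Measure X :=
  Measure.sum fun i => ENNReal.ofReal (w i) • Measure.dirac (p i)

theorem isProbabilityMeasure_weightedDiracSum {w : ι → ℝ} (hw : IsProbMeasure w) (p : ι → X) :
    IsProbabilityMeasure (weightedDiracSum w p) := by
  constructor
  simp only [weightedDiracSum, Measure.sum_apply _ MeasurableSet.univ, Measure.smul_apply,
    Measure.dirac_apply_of_mem (Set.mem_univ _), smul_eq_mul, mul_one]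
  rw [← ENNReal.ofReal_tsum_of_nonneg hw.1 hw.2.summable, hw.2.tsum_eq, ENNReal.ofReal_one]

theorem map_weightedDiracSum {Y : Type*} [MeasurableSpace Y] (w : ι → ℝ) (p : ι → X)
    {φ : X → Y} (hφ : Measurable φ) :
    (weightedDiracSum w p).map φ = weightedDiracSum w (φ ∘ p) := by
  simp only [weightedDiracSum, Measure.map_sum hφ.aemeasurable, Measure.map_smul,
    Measure.map_dirac' hφ, Function.comp_apply]

theorem weightedDiracSum_comp_equiv {ι' : Type*} (e : ι' ≃ ι) (w : ι → ℝ) (p : ι → X) :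
    weightedDiracSum (w ∘ e) (p ∘ e) = weightedDiracSum w p :=
  Measure.sum_comp_equiv e fun i => ENNReal.ofReal (w i) • Measure.dirac (p i)

theorem integral_weightedDiracSum [Countable ι] [MeasurableSingletonClass X] {w : ι → ℝ}
    (hw : ∀ i, 0 ≤ w i) (p : ι → X) (f : X → ℝ) :
    ∫ x, f x ∂weightedDiracSum w p = ∑' i, w i * f (p i) := by
  simp only [weightedDiracSum, integral_sum_dirac (fun i => ENNReal.ofReal_ne_top),
    ENNReal.toReal_ofReal (hw _), smul_eq_mul]

theorem map_smul_weightedDiracSum_orbit {G : Type*} [Group G] [MulAction G X] (w : G → ℝ)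
    (x : X) {g : G} (hg : Measurable fun y : X => g • y) :
    (weightedDiracSum w (· • x)).map (g • ·) =
      weightedDiracSum (fun h => w (g⁻¹ * h)) (· • x) := by
  rw [map_weightedDiracSum w _ hg, ← weightedDiracSum_comp_equiv (Equiv.mulLeft g⁻¹)]
  congr 1
  funext h
  simp [mul_smul]

theorem tendsto_integral_map_smul_sub_integral {G : Type*} [Group G] [Countable G]
    [MulAction G X] [TopologicalSpace X] [MeasurableSingletonClass X] {lam : ℕ → G → ℝ}
    (hlam : ∀ n, IsProbMeasure (lam n)) {g : G} (hg : Measurable fun y : X => g • y)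
    (hReiter : Tendsto (fun n => ∑' h, |lam n (g⁻¹ * h) - lam n h|) atTop (𝓝 0))
    (x : X) (f : X →ᵇ ℝ) :
    Tendsto (fun n => ∫ y, f y ∂(weightedDiracSum (lam n) (· • x)).map (g • ·) -
      ∫ y, f y ∂weightedDiracSum (lam n) (· • x)) atTop (𝓝 0) := by
  have hbound (n : ℕ) : |∫ y, f y ∂(weightedDiracSum (lam n) (· • x)).map (g • ·) -
      ∫ y, f y ∂weightedDiracSum (lam n) (· • x)| ≤ ‖f‖ * ∑' h, |lam n (g⁻¹ * h) - lam n h| := by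
    rw [map_smul_weightedDiracSum_orbit _ _ hg, integral_weightedDiracSum (fun h => (hlam n).1 _),
      integral_weightedDiracSum (hlam n).1]
    exact abs_tsum_mul_sub_tsum_mul_le
      ((Equiv.mulLeft g⁻¹).summable_iff.mpr (hlam n).2.summable) (hlam n).2.summable
      (fun h => f.norm_coe_le_norm _)
  rw [tendsto_zero_iff_abs_tendsto_zero]
  exact squeeze_zero (fun _ => abs_nonneg _) hbound (by simpa using hReiter.const_mul ‖f‖)

end WeightedDiracSum

theorem ProbabilityMeasure.tendsto_of_tendsto_of_integral_sub_tendsto_zero {Ω γ : Type*}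
    [MeasurableSpace Ω] [TopologicalSpace Ω] [OpensMeasurableSpace Ω] {F : Filter γ}
    {μs νs : γ → ProbabilityMeasure Ω} {μ : ProbabilityMeasure Ω} (hμ : Tendsto μs F (𝓝 μ))
    (h : ∀ f : Ω →ᵇ ℝ, Tendsto (fun i => ∫ ω, f ω ∂(νs i : Measure Ω) -
      ∫ ω, f ω ∂(μs i : Measure Ω)) F (𝓝 0)) :
    Tendsto νs F (𝓝 μ) := by
  rw [ProbabilityMeasure.tendsto_iff_forall_integral_tendsto] at hμ ⊢
  intro f
  simpa using (h f).add (hμ f)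

end MeasureTheory

open MeasureTheory

/-- A countable discrete group satisfying Reiter's condition acting by homeomorphisms on a
nonempty compact metrizable space admits an invariant Borel probability measure. -/
theorem reiter_implies_invariant_measure {G : Type*} [Group G] [Countable G]
    (hReiter : ReiterCondition G)
    (X : Type*) [TopologicalSpace X] [CompactSpace X] [TopologicalSpace.MetrizableSpace X]
    [Nonempty X] [MeasurableSpace X] [BorelSpace X]
    [MulAction G X] (hcont : ∀ g : G, Continuous (fun x : X => g • x)) :
    ∃ ν : Measure X, IsProbabilityMeasure ν ∧
      ∀ g : G, Measure.map (fun x : X => g • x) ν = ν := by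
  obtain ⟨lam, hlam, hReiter⟩ := hReiter
  obtain ⟨x₀⟩ := ‹Nonempty X›
  let νs (n : ℕ) : ProbabilityMeasure X :=
    ⟨weightedDiracSum (lam n) (· • x₀), isProbabilityMeasure_weightedDiracSum (hlam n) _⟩
  let u : Ultrafilter ℕ := .of atTop
  obtain ⟨ν, -, hν⟩ := isCompact_univ.ultrafilter_le_nhds (u.map νs) (by simp)
  replace hν : Tendsto νs u (𝓝 ν) := hν
  refine ⟨ν, inferInstance, fun g => ?_⟩
  have hmap := ProbabilityMeasure.tendsto_map_of_tendsto_of_continuous νs ν hν (hcont g)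
  have hinv : Tendsto (fun n => (νs n).map (hcont g).measurable.aemeasurable) u (𝓝 ν) :=
    ProbabilityMeasure.tendsto_of_tendsto_of_integral_sub_tendsto_zero hν fun f =>
      (tendsto_integral_map_smul_sub_integral hlam (hcont g).measurable (hReiter g) x₀ f).mono_left
        (Ultrafilter.of_le _)
  exact congrArg ProbabilityMeasure.toMeasure (tendsto_nhds_unique hmap hinv)
end

section
/- Let G be a countable discrete group satisfying Reiter's condition, let E be a Hausdorff locally convex real topological vector space, let K ⊆ E be a nonempty compact convex subset, and let G act on K by continuous affine maps. Then the action has a fixed point: there exists p ∈ K with g·p = p for all g ∈ G. -/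
/-!
Truncate the Reiter measures `λₙ` to finite sets carrying almost all of their mass and average
the orbit of a point `x₀ ∈ K` against them: the barycenters `qₙ` lie in `K`. For a continuous
functional `f`, affinity of the action turns `f (g • qₙ) - f qₙ` into an average of
`f (gh • x₀) - f (h • x₀)`, which after reindexing is bounded by `sup_K |f|` times
`‖gλₙ - λₙ‖` plus the truncation error, so it tends to `0`. At a cluster point `p` of `(qₙ)`
this gives `f (g • p) = f p`, and continuous functionals separate points of a Hausdorff locally
convex space.
-/

open Filter Topology

section Barycenter

variable {𝕜 E β ι : Type*} [Field 𝕜] [LinearOrder 𝕜] [IsStrictOrderedRing 𝕜]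
  [AddCommGroup E] [Module 𝕜 E] [AddCommGroup β] [PartialOrder β] [IsOrderedAddMonoid β]
  [Module 𝕜 β] [IsStrictOrderedModule 𝕜 β]

lemma Convex.map_centerMass_of_affine {K : Set E} (hK : Convex 𝕜 K) {φ : E → β}
    (hφ : ∀ x ∈ K, ∀ y ∈ K, ∀ t : 𝕜, 0 ≤ t → t ≤ 1 →
      φ (t • x + (1 - t) • y) = t • φ x + (1 - t) • φ y)
    {t : Finset ι} {w : ι → 𝕜} {z : ι → E} (h₀ : ∀ i ∈ t, 0 ≤ w i) (h₁ : 0 < ∑ i ∈ t, w i)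
    (hz : ∀ i ∈ t, z i ∈ K) :
    φ (t.centerMass w z) = t.centerMass w (φ ∘ z) := by
  have hφ' : ∀ x ∈ K, ∀ y ∈ K, ∀ a b : 𝕜, 0 ≤ a → 0 ≤ b → a + b = 1 →
      φ (a • x + b • y) = a • φ x + b • φ y := by
    intro x hx y hy a b ha hb hab
    obtain rfl : b = 1 - a := by rw [← hab, add_sub_cancel_left]
    exact hφ x hx y hy a ha (sub_nonneg.1 hb)
  have hconvex : ConvexOn 𝕜 K φ :=
    ⟨hK, fun x hx y hy a b ha hb hab => (hφ' x hx y hy a b ha hb hab).le⟩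
  have hconcave : ConcaveOn 𝕜 K φ :=
    ⟨hK, fun x hx y hy a b ha hb hab => (hφ' x hx y hy a b ha hb hab).ge⟩
  exact le_antisymm (hconvex.map_centerMass_le h₀ h₁ hz) (hconcave.le_map_centerMass h₀ h₁ hz)

end Barycenter

section Averages

variable {ι : Type*} {μ v : ι → ℝ} {C : ℝ}

lemma summable_mul_of_abs_le_s5 (hμ : Summable μ) (hv : ∀ i, |v i| ≤ C) :
    Summable fun i => μ i * v i :=
  (hμ.abs.mul_right C).of_norm_bounded fun i => by
    rw [Real.norm_eq_abs, abs_mul]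
    exact mul_le_mul_of_nonneg_left (hv i) (abs_nonneg _)

lemma abs_tsum_mul_sub_sum_mul_le (hμ₀ : ∀ i, 0 ≤ μ i) {a : ℝ} (hμ : HasSum μ a)
    (hv : ∀ i, |v i| ≤ C) (F : Finset ι) :
    |∑' i, μ i * v i - ∑ i ∈ F, μ i * v i| ≤ C * (a - ∑ i ∈ F, μ i) := by
  have htail : ∑' i : ↑(↑F : Set ι)ᶜ, μ i = a - ∑ i ∈ F, μ i := by
    rw [← hμ.tsum_eq, ← hμ.summable.sum_add_tsum_compl (s := F), add_sub_cancel_left]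
  rw [← (summable_mul_of_abs_le_s5 hμ.summable hv).sum_add_tsum_compl (s := F),
    add_sub_cancel_left, ← htail, ← Real.norm_eq_abs]
  refine tsum_of_norm_bounded ((hμ.summable.subtype _).hasSum.mul_left C) fun i => ?_
  rw [Real.norm_eq_abs, abs_mul, abs_of_nonneg (hμ₀ i), mul_comm]
  exact mul_le_mul_of_nonneg_right (hv i) (hμ₀ i)

variable {G : Type*} [Group G] {μ v : G → ℝ}

lemma abs_tsum_mul_comp_mul_sub_le (hμ : Summable μ) (hv : ∀ h, |v h| ≤ C) (g : G) :
    |∑' h, μ h * v (g * h) - ∑' h, μ h * v h| ≤ C * ∑' h, |μ (g⁻¹ * h) - μ h| := by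
  have hμg : Summable fun h => μ (g⁻¹ * h) := (Equiv.mulLeft g⁻¹).summable_iff.2 hμ
  have hshift : ∑' h, μ h * v (g * h) = ∑' h, μ (g⁻¹ * h) * v h := by
    simpa using (Equiv.mulLeft g).tsum_eq fun h => μ (g⁻¹ * h) * v h
  rw [hshift, ← (summable_mul_of_abs_le_s5 hμg hv).tsum_sub (summable_mul_of_abs_le_s5 hμ hv),
    ← Real.norm_eq_abs]
  refine tsum_of_norm_bounded ((hμg.sub hμ).abs.hasSum.mul_left C) fun h => ?_
  rw [Real.norm_eq_abs, ← sub_mul, abs_mul, mul_comm]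
  exact mul_le_mul_of_nonneg_right (hv h) (abs_nonneg _)

lemma abs_sum_mul_comp_mul_sub_le (hμ : IsProbMeasure μ) (hv : ∀ h, |v h| ≤ C) (g : G)
    (F : Finset G) :
    |∑ h ∈ F, μ h * v (g * h) - ∑ h ∈ F, μ h * v h| ≤
      C * (2 * (1 - ∑ h ∈ F, μ h) + ∑' h, |μ (g⁻¹ * h) - μ h|) := by
  have htrunc_g := abs_tsum_mul_sub_sum_mul_le hμ.1 hμ.2 (fun h => hv (g * h)) F
  have hshift := abs_tsum_mul_comp_mul_sub_le hμ.2.summable hv g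
  have htrunc := abs_tsum_mul_sub_sum_mul_le hμ.1 hμ.2 hv F
  rw [abs_le] at *
  constructor <;> linarith

end Averages

lemma exists_finset_tendsto_sum_one {ι : Type*} {lam : ℕ → ι → ℝ}
    (hprob : ∀ n, IsProbMeasure (lam n)) :
    ∃ F : ℕ → Finset ι, (∀ n, 0 < ∑ i ∈ F n, lam n i) ∧
      Tendsto (fun n => ∑ i ∈ F n, lam n i) atTop (𝓝 1) := by
  have hlt : ∀ n : ℕ, 1 - 1 / ((n : ℝ) + 1) < 1 := fun n => by
    rw [sub_lt_self_iff]
    positivity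
  have hF : ∀ n, ∃ F : Finset ι,
      0 < ∑ i ∈ F, lam n i ∧ 1 - 1 / ((n : ℝ) + 1) < ∑ i ∈ F, lam n i :=
    fun n => ((hprob n).2.eventually
      ((eventually_gt_nhds one_pos).and (eventually_gt_nhds (hlt n)))).exists
  choose F hpos hlow using hF
  refine ⟨F, hpos, tendsto_of_tendsto_of_tendsto_of_le_of_le ?_ tendsto_const_nhds
    (fun n => (hlow n).le) fun n => sum_le_hasSum _ (fun i _ => (hprob n).1 i) (hprob n).2⟩
  simpa using tendsto_one_div_add_atTop_nhds_zero_nat.const_sub (1 : ℝ)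

lemma tendsto_centerMass_comp_mul_sub {G : Type*} [Group G] {lam : ℕ → G → ℝ}
    (hprob : ∀ n, IsProbMeasure (lam n)) {F : ℕ → Finset G}
    (hF : Tendsto (fun n => ∑ h ∈ F n, lam n h) atTop (𝓝 1)) {g : G}
    (hg : Tendsto (fun n => ∑' h, |lam n (g⁻¹ * h) - lam n h|) atTop (𝓝 0))
    {v : G → ℝ} {C : ℝ} (hv : ∀ h, |v h| ≤ C) :
    Tendsto (fun n => (F n).centerMass (lam n) fun h => v (g * h) - v h) atTop (𝓝 0) := by
  have hbound : Tendsto (fun n => (∑ h ∈ F n, lam n h)⁻¹ *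
      (C * (2 * (1 - ∑ h ∈ F n, lam n h) + ∑' h, |lam n (g⁻¹ * h) - lam n h|)))
      atTop (𝓝 0) := by
    simpa using (hF.inv₀ one_ne_zero).mul
      ((((hF.const_sub 1).const_mul 2).add hg).const_mul C)
  refine squeeze_zero_norm (fun n => ?_) hbound
  have hmass : 0 ≤ ∑ h ∈ F n, lam n h := Finset.sum_nonneg fun h _ => (hprob n).1 h
  rw [Finset.centerMass, norm_smul, norm_inv, Real.norm_eq_abs, Real.norm_eq_abs,
    abs_of_nonneg hmass]
  have hsum := abs_sum_mul_comp_mul_sub_le (hprob n) hv g (F n)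
  simp only [smul_eq_mul, mul_sub, Finset.sum_sub_distrib] at hsum ⊢
  exact mul_le_mul_of_nonneg_left hsum (inv_nonneg.2 hmass)

lemma MapClusterPt.eq_of_continuousWithinAt_of_tendsto {X Y α : Type*} [TopologicalSpace X]
    [TopologicalSpace Y] [T2Space Y] {l : Filter α} {u : α → X} {x : X} {K : Set X}
    {ψ : X → Y} {y : Y} (hx : MapClusterPt x l u) (huK : ∀ᶠ a in l, u a ∈ K)
    (hψ : ContinuousWithinAt ψ K x) (hlim : Tendsto (ψ ∘ u) l (𝓝 y)) : ψ x = y :=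
  have hψx : MapClusterPt (ψ x) l (ψ ∘ u) :=
    hx.tendsto_comp' (hψ.mono_left (inf_le_inf_left _ (tendsto_principal.2 huK)))
  have : ClusterPt (ψ x) (𝓝 y) := hψx.clusterPt.mono hlim
  eq_of_nhds_neBot this

theorem reiter_implies_fixed_point_general {G : Type*} [Group G]
    (hReiter : ReiterCondition G)
    {E : Type*} [AddCommGroup E] [Module ℝ E] [TopologicalSpace E]
    [IsTopologicalAddGroup E] [ContinuousSMul ℝ E] [T2Space E] [LocallyConvexSpace ℝ E]
    (K : Set E) (hne : K.Nonempty) (hcomp : IsCompact K) (hconv : Convex ℝ K)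
    (act : G → E → E)
    (hmaps : ∀ g : G, Set.MapsTo (act g) K K)
    (hmul : ∀ g h : G, ∀ x ∈ K, act (g * h) x = act g (act h x))
    (hcont : ∀ g : G, ContinuousOn (act g) K)
    (haffine : ∀ g : G, ∀ x ∈ K, ∀ y ∈ K, ∀ t : ℝ, 0 ≤ t → t ≤ 1 →
      act g (t • x + (1 - t) • y) = t • act g x + (1 - t) • act g y) :
    ∃ p ∈ K, ∀ g : G, act g p = p := by
  obtain ⟨lam, hprob, hlim⟩ := hReiter
  obtain ⟨x₀, hx₀⟩ := hne
  obtain ⟨F, hF_pos, hF⟩ := exists_finset_tendsto_sum_one hprob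
  set q : ℕ → E := fun n => (F n).centerMass (lam n) fun h => act h x₀
  have hqK : ∀ n, q n ∈ K := fun n =>
    hconv.centerMass_mem (fun h _ => (hprob n).1 h) (hF_pos n) fun h _ => hmaps h hx₀
  obtain ⟨p, hpK, hp⟩ :=
    hcomp.exists_mapClusterPt (f := atTop) (tendsto_principal.2 (.of_forall hqK))
  refine ⟨p, hpK, fun g => (SeparatingDual.eq_iff_forall_dual_eq (R := ℝ)).2 fun f => ?_⟩
  rw [← sub_eq_zero]
  set ψ : E → ℝ := fun x => f (act g x) - f x
  have hψ_affine : ∀ x ∈ K, ∀ y ∈ K, ∀ t : ℝ, 0 ≤ t → t ≤ 1 →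
      ψ (t • x + (1 - t) • y) = t • ψ x + (1 - t) • ψ y := by
    intro x hx y hy t ht₀ ht₁
    simp only [ψ, haffine g x hx y hy t ht₀ ht₁, map_add, map_smul, smul_eq_mul]
    ring
  have hψq : ψ ∘ q = fun n => (F n).centerMass (lam n) fun h =>
      f (act (g * h) x₀) - f (act h x₀) := by
    funext n
    rw [Function.comp_apply, hconv.map_centerMass_of_affine hψ_affine
      (fun h _ => (hprob n).1 h) (hF_pos n) fun h _ => hmaps h hx₀]
    simp only [Function.comp_def, ψ, hmul g _ x₀ hx₀]
  obtain ⟨C, hC⟩ := hcomp.exists_bound_of_continuousOn f.continuous.continuousOn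
  have hψ_cont : ContinuousOn ψ K :=
    (f.continuous.comp_continuousOn (hcont g)).sub f.continuous.continuousOn
  refine hp.eq_of_continuousWithinAt_of_tendsto (.of_forall hqK) (hψ_cont p hpK) ?_
  rw [hψq]
  exact tendsto_centerMass_comp_mul_sub hprob hF (hlim g) (v := fun h => f (act h x₀))
    fun h => hC _ (hmaps h hx₀)

/-- A countable discrete group satisfying Reiter's condition which acts by continuous
affine maps on a nonempty compact convex subset of a Hausdorff locally convex real
topological vector space has a fixed point. -/
theorem reiter_implies_fixed_point {G : Type*} [Group G] [Countable G]
    (hReiter : ReiterCondition G)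
    {E : Type*} [AddCommGroup E] [Module ℝ E] [TopologicalSpace E]
    [IsTopologicalAddGroup E] [ContinuousSMul ℝ E] [T2Space E] [LocallyConvexSpace ℝ E]
    (K : Set E) (hne : K.Nonempty) (hcomp : IsCompact K) (hconv : Convex ℝ K)
    (act : G → E → E)
    (hmaps : ∀ g : G, Set.MapsTo (act g) K K)
    (hone : ∀ x ∈ K, act 1 x = x)
    (hmul : ∀ g h : G, ∀ x ∈ K, act (g * h) x = act g (act h x))
    (hcont : ∀ g : G, ContinuousOn (act g) K)
    (haffine : ∀ g : G, ∀ x ∈ K, ∀ y ∈ K, ∀ t : ℝ, 0 ≤ t → t ≤ 1 →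
      act g (t • x + (1 - t) • y) = t • act g x + (1 - t) • act g y) :
    ∃ p ∈ K, ∀ g : G, act g p = p :=
  reiter_implies_fixed_point_general hReiter K hne hcomp hconv act hmaps hmul hcont haffine
end

section
/- A countable discrete group G satisfies Reiter's condition if and only if there exists a probability measure μ on G whose support generates G as a group and whose convolution powers are approximatively invariant, i.e. ‖gμ^{*n} − μ^{*n}‖ → 0 as n → ∞ for every g ∈ G. -/
open Filter Topology
open scoped Classical

/-- Convolution of two measures on a discrete group: `(μ*ν)(g) = ∑_h μ(h) ν(h⁻¹g)`. -/
noncomputable def conv {G : Type*} [Group G] (μ ν : G → ℝ) : G → ℝ :=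
  fun g => ∑' h, μ h * ν (h⁻¹ * g)

/-- Convolution powers of a measure, with `μ^{*0} = δ_e`. -/
noncomputable def convPow {G : Type*} [Group G] (μ : G → ℝ) : ℕ → G → ℝ
  | 0 => fun g => if g = 1 then 1 else 0
  | n + 1 => conv (convPow μ n) μ

/-!
Given Reiter's condition, take `μ = ∑ₖ 2^{-(k+1)} νₖ` where `ν₀` has full support and the later
`νₖ` are chosen along the Reiter sequence so that each one is, on average over each earlier `νⱼ`,
nearly invariant under translation (`avgDisplacement`). Cutting the series after `M` terms gives
`μ = (1 - t) ρ + t σ` with `t = 2^{-(M+1)}` and `‖ρ * σ - σ‖ ≤ t²`. From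
`μ^{n+1} = (1 - t) ρ * μ^n + t σ * μ^n`, induction on `n` puts `μ^n` within `2 (1 - t)^n + t` of
some `σ * Y`, and a translate `g (σ * Y) = (g σ) * Y` moves by at most `‖g σ - σ‖ = O(t²)`.
Letting `n → ∞` and then `M → ∞` gives `‖g μ^n - μ^n‖ → 0`. Conversely the convolution powers
themselves form a Reiter sequence.
-/

open scoped ENNReal

theorem exists_forall_le_of_tendsto {R : ℕ → ℕ → ℝ≥0∞} (hR : ∀ i, Tendsto (R i) atTop (𝓝 0))
    {δ : ℕ → ℝ≥0∞} (hδ : ∀ m, 0 < δ m) (hδ_anti : Antitone δ) :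
    ∃ φ : ℕ → ℕ, φ 0 = 0 ∧ ∀ k M l, k ≤ M → M < l → R (φ k) (φ l) ≤ δ M := by
  have hnext : ∀ m, ∃ n, m < n ∧ ∀ i ∈ Finset.range (m + 1), R i n ≤ δ m := fun m =>
    ((eventually_gt_atTop m).and <| (Finset.range (m + 1)).eventually_all.2 fun i _ =>
      ENNReal.tendsto_nhds_zero.1 (hR i) (δ m) (hδ m)).exists
  choose f hf_gt hf using hnext
  have hmono : StrictMono fun k => f^[k] 0 := strictMono_nat_of_lt_succ fun k => by
    rw [Function.iterate_succ_apply']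
    exact hf_gt _
  refine ⟨fun k => f^[k] 0, rfl, fun k M l hkM hMl => ?_⟩
  obtain ⟨l, rfl⟩ : ∃ l', l = l' + 1 := ⟨l - 1, by omega⟩
  simp only [Function.iterate_succ_apply']
  exact (hf _ _ (Finset.mem_range_succ_iff.2 (hmono.monotone (by omega)))).trans
    (hδ_anti ((Nat.lt_succ_iff.1 hMl).trans (hmono.id_le l)))

theorem tendsto_zero_of_forall_le_add {a c : ℕ → ℝ} {b : ℕ → ℕ → ℝ} (ha : ∀ n, 0 ≤ a n)
    (hb : ∀ M, Tendsto (b M) atTop (𝓝 0)) (hc : Tendsto c atTop (𝓝 0))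
    (h : ∀ M n, a n ≤ b M n + c M) : Tendsto a atTop (𝓝 0) := by
  refine tendsto_order.2 ⟨fun e he => .of_forall fun n => he.trans_le (ha n), fun e he => ?_⟩
  obtain ⟨M, hM⟩ := (hc.eventually (gt_mem_nhds (half_pos he))).exists
  filter_upwards [(hb M).eventually (gt_mem_nhds (half_pos he))] with n hn
  linarith [h M n]

section L1Norm

variable {α : Type*}

/-- The ℓ¹ norm, valued in `ℝ≥0∞` so that it needs no summability hypothesis. -/
noncomputable def l1Norm (f : α → ℝ) : ℝ≥0∞ := ∑' a, ‖f a‖ₑ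

theorem l1Norm_toReal (f : α → ℝ) : (l1Norm f).toReal = ∑' a, |f a| := by
  rw [l1Norm, ENNReal.tsum_toReal_eq fun _ => enorm_ne_top]
  simp [toReal_enorm]

theorem l1Norm_add_le (f g : α → ℝ) : l1Norm (f + g) ≤ l1Norm f + l1Norm g := by
  rw [l1Norm, l1Norm, l1Norm, ← ENNReal.tsum_add]
  exact ENNReal.tsum_le_tsum fun a => enorm_add_le _ _

theorem l1Norm_sub_le_add (f g k : α → ℝ) : l1Norm (f - k) ≤ l1Norm (f - g) + l1Norm (g - k) := by
  simpa using l1Norm_add_le (f - g) (g - k)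

theorem l1Norm_sub_comm (f g : α → ℝ) : l1Norm (f - g) = l1Norm (g - f) := by
  simp only [l1Norm, Pi.sub_apply, enorm_sub_rev]

theorem l1Norm_smul (c : ℝ) (f : α → ℝ) : l1Norm (c • f) = ‖c‖ₑ * l1Norm f := by
  simp only [l1Norm, Pi.smul_apply, smul_eq_mul, enorm_mul, ENNReal.tsum_mul_left]

theorem l1Norm_tsum_le {ι : Type*} (F : ι → α → ℝ) :
    l1Norm (fun a => ∑' i, F i a) ≤ ∑' i, l1Norm (F i) := by
  simp only [l1Norm]
  exact (ENNReal.tsum_le_tsum fun a => enorm_tsum_le_tsum_enorm).trans_eq ENNReal.tsum_comm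

theorem l1Norm_comp_equiv (e : α ≃ α) (f : α → ℝ) : l1Norm (f ∘ e) = l1Norm f :=
  e.tsum_eq fun a => ‖f a‖ₑ

theorem tendsto_tsum_abs_iff_tendsto_l1Norm {ι : Type*} {l : Filter ι} {F : ι → α → ℝ}
    (hF : ∀ i, l1Norm (F i) ≠ ∞) :
    Tendsto (fun i => ∑' a, |F i a|) l (𝓝 0) ↔ Tendsto (fun i => l1Norm (F i)) l (𝓝 0) := by
  simpa only [l1Norm_toReal, ENNReal.toReal_zero] using
    ENNReal.tendsto_toReal_iff hF ENNReal.zero_ne_top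

end L1Norm

namespace IsProbMeasure

variable {α : Type*} {μ ν : α → ℝ}

theorem nonneg (hμ : IsProbMeasure μ) (a : α) : 0 ≤ μ a := hμ.1 a

theorem hasSum (hμ : IsProbMeasure μ) : HasSum μ 1 := hμ.2

theorem summable (hμ : IsProbMeasure μ) : Summable μ := hμ.hasSum.summable

theorem tsum_eq_one (hμ : IsProbMeasure μ) : ∑' a, μ a = 1 := hμ.hasSum.tsum_eq

theorem le_one (hμ : IsProbMeasure μ) (a : α) : μ a ≤ 1 :=
  le_hasSum hμ.hasSum a fun b _ => hμ.nonneg b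

theorem enorm_apply (hμ : IsProbMeasure μ) (a : α) : ‖μ a‖ₑ = ENNReal.ofReal (μ a) :=
  Real.enorm_of_nonneg (hμ.nonneg a)

theorem of_tsum_ofReal (h0 : ∀ a, 0 ≤ μ a) (h1 : ∑' a, ENNReal.ofReal (μ a) = 1) :
    IsProbMeasure μ := by
  have hne : ∑' a, ENNReal.ofReal (μ a) ≠ ∞ := by rw [h1]; exact ENNReal.one_ne_top
  refine ⟨h0, ?_⟩
  have hs := ENNReal.summable_toReal hne
  have hsum := ENNReal.tsum_toReal_eq fun a => (ENNReal.ofReal_ne_top (r := μ a))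
  simp only [h1, ENNReal.toReal_one, ENNReal.toReal_ofReal (h0 _)] at hs hsum
  exact hsum ▸ hs.hasSum

theorem tsum_ofReal (hμ : IsProbMeasure μ) : ∑' a, ENNReal.ofReal (μ a) = 1 := by
  rw [← ENNReal.ofReal_tsum_of_nonneg hμ.nonneg hμ.summable, hμ.tsum_eq_one, ENNReal.ofReal_one]

theorem l1Norm_eq_one (hμ : IsProbMeasure μ) : l1Norm μ = 1 := by
  simp only [l1Norm, hμ.enorm_apply, hμ.tsum_ofReal]

theorem l1Norm_sub_le_two (hμ : IsProbMeasure μ) (hν : IsProbMeasure ν) : l1Norm (μ - ν) ≤ 2 := by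
  calc l1Norm (μ - ν) ≤ l1Norm μ + l1Norm ((-1 : ℝ) • ν) := by
        simpa [sub_eq_add_neg] using l1Norm_add_le μ ((-1 : ℝ) • ν)
    _ = 2 := by rw [l1Norm_smul, hμ.l1Norm_eq_one, hν.l1Norm_eq_one]; norm_num

theorem l1Norm_sub_ne_top (hμ : IsProbMeasure μ) (hν : IsProbMeasure ν) : l1Norm (μ - ν) ≠ ∞ :=
  ne_top_of_le_ne_top ENNReal.ofNat_ne_top (hμ.l1Norm_sub_le_two hν)

theorem convex (hμ : IsProbMeasure μ) (hν : IsProbMeasure ν) {t : ℝ} (ht0 : 0 ≤ t) (ht1 : t ≤ 1) :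
    IsProbMeasure ((1 - t) • μ + t • ν) := by
  refine ⟨fun a => ?_, ?_⟩
  · simp only [Pi.add_apply, Pi.smul_apply, smul_eq_mul]
    exact add_nonneg (mul_nonneg (by linarith) (hμ.nonneg a)) (mul_nonneg ht0 (hν.nonneg a))
  · exact (show HasSum (fun a => (1 - t) * μ a + t * ν a) 1 by
      simpa using (hμ.hasSum.const_smul (1 - t)).add (hν.hasSum.const_smul t))

theorem single (a : α) : IsProbMeasure (Pi.single a 1 : α → ℝ) :=
  ⟨fun b => by by_cases h : b = a <;> simp [h], hasSum_pi_single a 1⟩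

end IsProbMeasure

section Convolution

variable {G : Type*} [Group G]

def leftTranslate (g : G) (f : G → ℝ) : G → ℝ := fun h => f (g⁻¹ * h)

theorem l1Norm_leftTranslate (g : G) (f : G → ℝ) : l1Norm (leftTranslate g f) = l1Norm f :=
  l1Norm_comp_equiv (Equiv.mulLeft g⁻¹) f

theorem leftTranslate_sub (g : G) (f f' : G → ℝ) :
    leftTranslate g (f - f') = leftTranslate g f - leftTranslate g f' := rfl

theorem IsProbMeasure.comp_leftTranslate {μ : G → ℝ} (hμ : IsProbMeasure μ) (g : G) :
    IsProbMeasure (leftTranslate g μ) :=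
  ⟨fun _ => hμ.nonneg _, (Equiv.mulLeft g⁻¹).hasSum_iff.2 hμ.hasSum⟩

theorem leftTranslate_conv (g : G) (f k : G → ℝ) :
    leftTranslate g (conv f k) = conv (leftTranslate g f) k := by
  funext h
  refine Eq.trans ?_ ((Equiv.mulLeft g).tsum_eq fun y => f (g⁻¹ * y) * k (y⁻¹ * h))
  simp [leftTranslate, conv, mul_assoc]

theorem conv_single_one (f : G → ℝ) : conv f (Pi.single 1 1) = f := by
  funext g
  simp only [conv, Pi.single_apply, inv_mul_eq_one, mul_ite, mul_one, mul_zero]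
  exact tsum_ite_eq g f

theorem single_one_conv (f : G → ℝ) : conv (Pi.single 1 1) f = f := by
  funext g
  simp [conv, Pi.single_apply]

theorem convPow_zero (μ : G → ℝ) : convPow μ 0 = Pi.single 1 1 := by
  funext g
  simp [convPow, Pi.single_apply]

theorem summable_conv_integrand {f k : G → ℝ} (hf : Summable f) (hk : Summable k) (g : G) :
    Summable fun x => f x * k (x⁻¹ * g) := by
  refine Summable.of_norm_bounded (hf.norm.mul_right (∑' y, ‖k y‖)) fun x => ?_
  rw [norm_mul]
  exact mul_le_mul_of_nonneg_left (hk.norm.le_tsum _ fun _ _ => norm_nonneg _) (norm_nonneg _)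

theorem smul_conv (c : ℝ) (f k : G → ℝ) : conv (c • f) k = c • conv f k := by
  funext g
  simp only [conv, Pi.smul_apply, smul_eq_mul, mul_assoc, tsum_mul_left]

theorem conv_smul (c : ℝ) (f k : G → ℝ) : conv f (c • k) = c • conv f k := by
  funext g
  simp only [conv, Pi.smul_apply, smul_eq_mul, mul_left_comm _ c, tsum_mul_left]

theorem add_conv {f f' k : G → ℝ} (hf : Summable f) (hf' : Summable f') (hk : Summable k) :
    conv (f + f') k = conv f k + conv f' k := by
  funext g
  simp only [conv, Pi.add_apply, add_mul]
  exact (summable_conv_integrand hf hk g).tsum_add (summable_conv_integrand hf' hk g)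

theorem conv_add {f k k' : G → ℝ} (hf : Summable f) (hk : Summable k) (hk' : Summable k') :
    conv f (k + k') = conv f k + conv f k' := by
  funext g
  simp only [conv, Pi.add_apply, mul_add]
  exact (summable_conv_integrand hf hk g).tsum_add (summable_conv_integrand hf hk' g)

theorem sub_conv {f f' k : G → ℝ} (hf : Summable f) (hf' : Summable f') (hk : Summable k) :
    conv (f - f') k = conv f k - conv f' k := by
  funext g
  simp only [conv, Pi.sub_apply, sub_mul]
  exact (summable_conv_integrand hf hk g).tsum_sub (summable_conv_integrand hf' hk g)

theorem conv_sub {f k k' : G → ℝ} (hf : Summable f) (hk : Summable k) (hk' : Summable k') :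
    conv f (k - k') = conv f k - conv f k' := by
  funext g
  simp only [conv, Pi.sub_apply, mul_sub]
  exact (summable_conv_integrand hf hk g).tsum_sub (summable_conv_integrand hf hk' g)

theorem l1Norm_conv_le (f k : G → ℝ) : l1Norm (conv f k) ≤ l1Norm f * l1Norm k := by
  calc l1Norm (conv f k) ≤ ∑' x, l1Norm (f x • leftTranslate x k) := l1Norm_tsum_le _
    _ = l1Norm f * l1Norm k := by
      simp only [l1Norm_smul, l1Norm_leftTranslate, ENNReal.tsum_mul_right]
      rfl

theorem ofReal_conv {f k : G → ℝ} (hf : IsProbMeasure f) (hk : IsProbMeasure k) (g : G) :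
    ENNReal.ofReal (conv f k g) = ∑' x, ENNReal.ofReal (f x) * ENNReal.ofReal (k (x⁻¹ * g)) := by
  rw [conv, ENNReal.ofReal_tsum_of_nonneg (fun x => mul_nonneg (hf.nonneg x) (hk.nonneg _))
    (summable_conv_integrand hf.summable hk.summable g)]
  simp only [ENNReal.ofReal_mul (hf.nonneg _)]

theorem IsProbMeasure.conv {f k : G → ℝ} (hf : IsProbMeasure f) (hk : IsProbMeasure k) :
    IsProbMeasure (conv f k) := by
  refine .of_tsum_ofReal (fun g => tsum_nonneg fun x => mul_nonneg (hf.nonneg x) (hk.nonneg _)) ?_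
  simp only [ofReal_conv hf hk]
  rw [ENNReal.tsum_comm]
  have hk1 : ∀ x : G, ∑' g, ENNReal.ofReal (k (x⁻¹ * g)) = 1 := fun x =>
    ((Equiv.mulLeft x⁻¹).tsum_eq fun g => ENNReal.ofReal (k g)).trans hk.tsum_ofReal
  simp only [ENNReal.tsum_mul_left, hk1, mul_one, hf.tsum_ofReal]

theorem conv_assoc {a b c : G → ℝ} (ha : IsProbMeasure a) (hb : IsProbMeasure b)
    (hc : IsProbMeasure c) : conv (conv a b) c = conv a (conv b c) := by
  funext g
  have hab := ha.conv hb
  have hbc := hb.conv hc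
  rw [← ENNReal.ofReal_eq_ofReal_iff ((hab.conv hc).nonneg g) ((ha.conv hbc).nonneg g),
    ofReal_conv hab hc, ofReal_conv ha hbc]
  simp only [ofReal_conv ha hb, ofReal_conv hb hc, ← ENNReal.tsum_mul_right,
    ← ENNReal.tsum_mul_left]
  rw [ENNReal.tsum_comm]
  congr 1
  ext x
  rw [← (Equiv.mulLeft x).tsum_eq]
  simp [mul_assoc]

theorem IsProbMeasure.convPow {μ : G → ℝ} (hμ : IsProbMeasure μ) (n : ℕ) :
    IsProbMeasure (convPow μ n) := by
  induction n with
  | zero => rw [convPow_zero]; exact .single 1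
  | succ n ih => exact ih.conv hμ

theorem convPow_succ' {μ : G → ℝ} (hμ : IsProbMeasure μ) (n : ℕ) :
    convPow μ (n + 1) = conv μ (convPow μ n) := by
  induction n with
  | zero =>
    show conv (convPow μ 0) μ = conv μ (convPow μ 0)
    rw [convPow_zero, conv_single_one, single_one_conv]
  | succ n ih =>
    show conv (convPow μ (n + 1)) μ = conv μ (conv (convPow μ n) μ)
    rw [ih, conv_assoc hμ (hμ.convPow n) hμ]

theorem l1Norm_conv_sub_conv_right_le {f f' k : G → ℝ} (hf : Summable f) (hf' : Summable f')
    (hk : IsProbMeasure k) : l1Norm (conv f k - conv f' k) ≤ l1Norm (f - f') := by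
  rw [← sub_conv hf hf' hk.summable]
  simpa [hk.l1Norm_eq_one] using l1Norm_conv_le (f - f') k

theorem l1Norm_conv_sub_conv_left_le {f k k' : G → ℝ} (hf : IsProbMeasure f) (hk : Summable k)
    (hk' : Summable k') : l1Norm (conv f k - conv f k') ≤ l1Norm (k - k') := by
  rw [← conv_sub hf.summable hk hk']
  simpa [hf.l1Norm_eq_one] using l1Norm_conv_le f (k - k')

end Convolution

section Splitting

variable {G : Type*} [Group G] {μ ρ σ : G → ℝ} {t ε : ℝ}

theorem convPow_succ_sub_conv (hρ : Summable ρ) (hσ : Summable σ) (hμ : IsProbMeasure μ)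
    (hμ_eq : μ = (1 - t) • ρ + t • σ) {Y : G → ℝ} (hY : Summable Y) (n : ℕ) :
    convPow μ (n + 1) - conv σ ((1 - t) • Y + t • convPow μ n)
      = (1 - t) • (conv ρ (convPow μ n) - conv σ Y) := by
  have hX := (hμ.convPow n).summable
  rw [convPow_succ' hμ]
  generalize convPow μ n = X at hX ⊢
  subst hμ_eq
  rw [add_conv (f := (1 - t) • ρ) (f' := t • σ) (hρ.const_smul (1 - t)) (hσ.const_smul t) hX,
    conv_add (k := (1 - t) • Y) (k' := t • X) hσ (hY.const_smul (1 - t)) (hX.const_smul t),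
    smul_conv, smul_conv, conv_smul, conv_smul]
  module

theorem exists_l1Norm_convPow_sub_conv_le (hρ : IsProbMeasure ρ) (hσ : IsProbMeasure σ)
    (ht0 : 0 < t) (ht1 : t ≤ 1) (hε0 : 0 ≤ ε) (hμ : μ = (1 - t) • ρ + t • σ)
    (hε : l1Norm (conv ρ σ - σ) ≤ ENNReal.ofReal ε) (n : ℕ) :
    ∃ Y, IsProbMeasure Y ∧
      l1Norm (convPow μ n - conv σ Y) ≤ ENNReal.ofReal (2 * (1 - t) ^ n + ε / t) := by
  have hμp : IsProbMeasure μ := hμ ▸ hρ.convex hσ ht0.le ht1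
  induction n with
  | zero =>
    refine ⟨Pi.single 1 1, .single 1, ?_⟩
    rw [convPow_zero, conv_single_one, pow_zero, mul_one]
    calc _ ≤ 2 := (IsProbMeasure.single 1).l1Norm_sub_le_two hσ
      _ ≤ _ := by rw [← ENNReal.ofReal_ofNat]; gcongr; linarith [div_nonneg hε0 ht0.le]
  | succ n ih =>
    obtain ⟨Y, hY, hYn⟩ := ih
    have hμn := hμp.convPow n
    refine ⟨(1 - t) • Y + t • convPow μ n, hY.convex hμn ht0.le ht1, ?_⟩
    -- `ρ * σ ≈ σ` lets the factor `ρ` be absorbed into `σ * Y`.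
    have hstep : l1Norm (conv ρ (convPow μ n) - conv σ Y)
        ≤ ENNReal.ofReal (2 * (1 - t) ^ n + ε / t) + ENNReal.ofReal ε := by
      calc _ ≤ l1Norm (conv ρ (convPow μ n) - conv ρ (conv σ Y))
            + l1Norm (conv (conv ρ σ) Y - conv σ Y) := by
            rw [conv_assoc hρ hσ hY]; exact l1Norm_sub_le_add _ _ _
        _ ≤ _ := add_le_add
            ((l1Norm_conv_sub_conv_left_le hρ hμn.summable (hσ.conv hY).summable).trans hYn)
            ((l1Norm_conv_sub_conv_right_le (hρ.conv hσ).summable hσ.summable hY).trans hε)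
    calc l1Norm _ = ENNReal.ofReal (1 - t) * l1Norm (conv ρ (convPow μ n) - conv σ Y) := by
          rw [convPow_succ_sub_conv hρ.summable hσ.summable hμp hμ hY.summable n, l1Norm_smul,
            Real.enorm_of_nonneg (by linarith)]
      _ ≤ ENNReal.ofReal (1 - t) * ENNReal.ofReal (2 * (1 - t) ^ n + ε / t + ε) := by
          rw [ENNReal.ofReal_add (by positivity) hε0]; gcongr
      _ ≤ _ := by
          rw [← ENNReal.ofReal_mul (by linarith)]
          apply ENNReal.ofReal_le_ofReal
          have : (1 - t) * (ε / t + ε) ≤ ε / t := by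
            rw [div_add' _ _ _ ht0.ne', mul_div_assoc', div_le_div_iff_of_pos_right ht0]
            nlinarith [mul_nonneg hε0 (sq_nonneg t)]
          rw [pow_succ]
          linarith

theorem l1Norm_leftTranslate_convPow_sub_le (hρ : IsProbMeasure ρ) (hσ : IsProbMeasure σ)
    (ht0 : 0 < t) (ht1 : t ≤ 1) (hε0 : 0 ≤ ε) (hμ : μ = (1 - t) • ρ + t • σ)
    (hε : l1Norm (conv ρ σ - σ) ≤ ENNReal.ofReal ε) (g : G) (n : ℕ) :
    l1Norm (leftTranslate g (convPow μ n) - convPow μ n)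
      ≤ ENNReal.ofReal (4 * (1 - t) ^ n + 2 * (ε / t)) + l1Norm (leftTranslate g σ - σ) := by
  obtain ⟨Y, hY, hYn⟩ := exists_l1Norm_convPow_sub_conv_le hρ hσ ht0 ht1 hε0 hμ hε n
  set Z := conv σ Y
  have hZ : l1Norm (leftTranslate g Z - Z) ≤ l1Norm (leftTranslate g σ - σ) := by
    rw [leftTranslate_conv]
    exact l1Norm_conv_sub_conv_right_le (hσ.comp_leftTranslate g).summable hσ.summable hY
  calc _ ≤ l1Norm (leftTranslate g (convPow μ n) - leftTranslate g Z)
        + (l1Norm (leftTranslate g Z - Z) + l1Norm (Z - convPow μ n)) :=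
        (l1Norm_sub_le_add _ (leftTranslate g Z) _).trans
          (by gcongr; exact l1Norm_sub_le_add _ _ _)
    _ ≤ ENNReal.ofReal (2 * (1 - t) ^ n + ε / t)
        + (l1Norm (leftTranslate g σ - σ) + ENNReal.ofReal (2 * (1 - t) ^ n + ε / t)) := by
        rw [← leftTranslate_sub, l1Norm_leftTranslate, l1Norm_sub_comm Z]
        gcongr
    _ = _ := by
        rw [add_comm (l1Norm _), ← add_assoc, ← ENNReal.ofReal_add (by positivity) (by positivity)]
        ring_nf

end Splitting

section Mixtures

variable {α : Type*}

theorem hasSum_two_inv_pow_succ : HasSum (fun k : ℕ => (2 : ℝ)⁻¹ ^ (k + 1)) 1 := by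
  simpa [pow_succ'] using hasSum_geometric_two.mul_left 2⁻¹

theorem tsum_enorm_two_inv_pow_succ : ∑' k : ℕ, ‖(2 : ℝ)⁻¹ ^ (k + 1)‖ₑ = 1 := by
  simp only [Real.enorm_of_nonneg (by positivity : (0 : ℝ) ≤ 2⁻¹ ^ (_ + 1))]
  rw [← ENNReal.ofReal_tsum_of_nonneg (fun _ => by positivity) hasSum_two_inv_pow_succ.summable,
    hasSum_two_inv_pow_succ.tsum_eq, ENNReal.ofReal_one]

theorem sum_range_two_inv_pow_succ (M : ℕ) :
    ∑ k ∈ Finset.range M, (2 : ℝ)⁻¹ ^ (k + 1) = 1 - 2⁻¹ ^ M := by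
  induction M with
  | zero => simp
  | succ M ih => rw [Finset.sum_range_succ, ih, pow_succ]; ring

noncomputable def mix (ν : ℕ → α → ℝ) : α → ℝ := fun a => ∑' k, (2 : ℝ)⁻¹ ^ (k + 1) * ν k a

noncomputable def mixHead (ν : ℕ → α → ℝ) (M : ℕ) : α → ℝ :=
  (1 - (2 : ℝ)⁻¹ ^ (M + 1))⁻¹ • ∑ k ∈ Finset.range (M + 1), (2 : ℝ)⁻¹ ^ (k + 1) • ν k

variable {ν : ℕ → α → ℝ}

theorem summable_mix_apply (hν : ∀ k, IsProbMeasure (ν k)) (a : α) :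
    Summable fun k => (2 : ℝ)⁻¹ ^ (k + 1) * ν k a :=
  hasSum_two_inv_pow_succ.summable.of_nonneg_of_le
    (fun k => mul_nonneg (by positivity) ((hν k).nonneg a))
    (fun k => mul_le_of_le_one_right (by positivity) ((hν k).le_one a))

theorem IsProbMeasure.mix (hν : ∀ k, IsProbMeasure (ν k)) : IsProbMeasure (mix ν) := by
  have hterm : ∀ k a, 0 ≤ (2 : ℝ)⁻¹ ^ (k + 1) * ν k a :=
    fun k a => mul_nonneg (by positivity) ((hν k).nonneg a)
  refine .of_tsum_ofReal (fun a => tsum_nonneg (hterm · a)) ?_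
  simp only [_root_.mix, ENNReal.ofReal_tsum_of_nonneg (hterm · _) (summable_mix_apply hν _),
    ENNReal.ofReal_mul (by positivity : (0 : ℝ) ≤ 2⁻¹ ^ (_ + 1))]
  rw [ENNReal.tsum_comm]
  simp only [ENNReal.tsum_mul_left, (hν _).tsum_ofReal, mul_one]
  rw [← tsum_enorm_two_inv_pow_succ]
  simp only [Real.enorm_of_nonneg (by positivity : (0 : ℝ) ≤ 2⁻¹ ^ (_ + 1))]

theorem mix_pos (hν : ∀ k, IsProbMeasure (ν k)) {k : ℕ} {a : α} (h : 0 < ν k a) : 0 < mix ν a :=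
  (mul_pos (by positivity) h).trans_le <| (summable_mix_apply hν a).le_tsum k fun j _ =>
    mul_nonneg (by positivity) ((hν j).nonneg a)

theorem IsProbMeasure.mixHead (hν : ∀ k, IsProbMeasure (ν k)) (M : ℕ) :
    IsProbMeasure (mixHead ν M) := by
  have ht : (2 : ℝ)⁻¹ ^ (M + 1) < 1 := pow_lt_one₀ (by norm_num) (by norm_num) (by omega)
  refine ⟨fun a => ?_, ?_⟩
  · simp only [_root_.mixHead, Pi.smul_apply, Finset.sum_apply, smul_eq_mul]
    exact mul_nonneg (inv_nonneg.2 (by linarith))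
      (Finset.sum_nonneg fun k _ => mul_nonneg (by positivity) ((hν k).nonneg a))
  · have := (hasSum_sum fun k (_ : k ∈ Finset.range (M + 1)) =>
      ((hν k).hasSum.const_smul ((2 : ℝ)⁻¹ ^ (k + 1)))).const_smul (1 - (2 : ℝ)⁻¹ ^ (M + 1))⁻¹
    simp only [smul_eq_mul, mul_one, sum_range_two_inv_pow_succ,
      inv_mul_cancel₀ (by linarith : 1 - (2 : ℝ)⁻¹ ^ (M + 1) ≠ 0)] at this
    convert this using 1
    ext a
    simp [_root_.mixHead]

theorem mix_eq_mixHead_add_mix (hν : ∀ k, IsProbMeasure (ν k)) (M : ℕ) :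
    mix ν = (1 - (2 : ℝ)⁻¹ ^ (M + 1)) • mixHead ν M
      + (2 : ℝ)⁻¹ ^ (M + 1) • mix (fun j => ν (j + (M + 1))) := by
  have ht : (2 : ℝ)⁻¹ ^ (M + 1) < 1 := pow_lt_one₀ (by norm_num) (by norm_num) (by omega)
  funext a
  rw [mixHead, smul_smul, mul_inv_cancel₀ (by linarith), one_smul]
  simp only [mix, Pi.add_apply, Pi.smul_apply, Finset.sum_apply, smul_eq_mul, ← tsum_mul_left]
  rw [← (summable_mix_apply hν a).sum_add_tsum_nat_add (M + 1)]
  congr 1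
  exact tsum_congr fun j => by ring

theorem exists_isProbMeasure_forall_pos (α : Type*) [Countable α] [Nonempty α] :
    ∃ η : α → ℝ, IsProbMeasure η ∧ ∀ a, 0 < η a := by
  obtain ⟨e, he⟩ := exists_surjective_nat α
  refine ⟨mix fun k => Pi.single (e k) 1, .mix fun k => .single _, fun a => ?_⟩
  obtain ⟨k, rfl⟩ := he a
  exact mix_pos (fun k => .single _) (k := k) (by simp)

end Mixtures

section Displacement

variable {G : Type*} [Group G]

noncomputable def avgDisplacement (π τ : G → ℝ) : ℝ≥0∞ :=
  ∑' x, ‖π x‖ₑ * l1Norm (leftTranslate x τ - τ)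

theorem enorm_mul_l1Norm_le_avgDisplacement (π τ : G → ℝ) (g : G) :
    ‖π g‖ₑ * l1Norm (leftTranslate g τ - τ) ≤ avgDisplacement π τ :=
  ENNReal.le_tsum g

theorem l1Norm_conv_sub_le_avgDisplacement {π τ : G → ℝ} (hπ : IsProbMeasure π)
    (hτ : IsProbMeasure τ) : l1Norm (conv π τ - τ) ≤ avgDisplacement π τ := by
  have : conv π τ - τ = fun h => ∑' x, (π x • (leftTranslate x τ - τ)) h := by
    funext h
    simp only [Pi.sub_apply, conv, Pi.smul_apply, smul_eq_mul, leftTranslate, mul_sub]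
    rw [(summable_conv_integrand hπ.summable hτ.summable h).tsum_sub
      (hπ.summable.mul_right _), tsum_mul_right, hπ.tsum_eq_one, one_mul]
  rw [this]
  exact (l1Norm_tsum_le _).trans_eq (by simp only [l1Norm_smul]; rfl)

theorem avgDisplacement_smul (c : ℝ) (π τ : G → ℝ) :
    avgDisplacement (c • π) τ = ‖c‖ₑ * avgDisplacement π τ := by
  simp only [avgDisplacement, Pi.smul_apply, smul_eq_mul, enorm_mul, mul_assoc,
    ENNReal.tsum_mul_left]

theorem avgDisplacement_finset_sum {ι : Type*} (s : Finset ι) {π : ι → G → ℝ}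
    (hπ : ∀ i ∈ s, ∀ x, 0 ≤ π i x) (τ : G → ℝ) :
    avgDisplacement (∑ i ∈ s, π i) τ = ∑ i ∈ s, avgDisplacement (π i) τ := by
  have : ∀ x, ‖(∑ i ∈ s, π i) x‖ₑ = ∑ i ∈ s, ‖π i x‖ₑ := fun x => by
    rw [Finset.sum_apply, Real.enorm_of_nonneg (Finset.sum_nonneg fun i hi => hπ i hi x),
      ENNReal.ofReal_sum_of_nonneg fun i hi => hπ i hi x]
    exact Finset.sum_congr rfl fun i hi => (Real.enorm_of_nonneg (hπ i hi x)).symm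
  simp only [avgDisplacement, this, Finset.sum_mul]
  exact Summable.tsum_finsetSum fun _ _ => ENNReal.summable

theorem avgDisplacement_mixHead_le {ν : ℕ → G → ℝ} (hν : ∀ k, IsProbMeasure (ν k)) (M : ℕ)
    {τ : G → ℝ} {ε : ℝ≥0∞} (h : ∀ k ≤ M, avgDisplacement (ν k) τ ≤ ε) :
    avgDisplacement (mixHead ν M) τ ≤ ε := by
  have ht : (2 : ℝ)⁻¹ ^ (M + 1) < 1 := pow_lt_one₀ (by norm_num) (by norm_num) (by omega)
  have hmass : ‖(1 - (2 : ℝ)⁻¹ ^ (M + 1))⁻¹‖ₑ * ∑ k ∈ Finset.range (M + 1), ‖(2 : ℝ)⁻¹ ^ (k + 1)‖ₑ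
      = 1 := by
    simp only [Real.enorm_of_nonneg (by positivity : (0 : ℝ) ≤ 2⁻¹ ^ (_ + 1)),
      Real.enorm_of_nonneg (inv_nonneg.2 (by linarith : (0 : ℝ) ≤ 1 - 2⁻¹ ^ (M + 1)))]
    rw [← ENNReal.ofReal_sum_of_nonneg fun _ _ => by positivity, ← ENNReal.ofReal_mul
      (inv_nonneg.2 (by linarith)), sum_range_two_inv_pow_succ, inv_mul_cancel₀ (by linarith),
      ENNReal.ofReal_one]
  calc avgDisplacement (mixHead ν M) τ
      = ‖(1 - (2 : ℝ)⁻¹ ^ (M + 1))⁻¹‖ₑ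
        * ∑ k ∈ Finset.range (M + 1), ‖(2 : ℝ)⁻¹ ^ (k + 1)‖ₑ * avgDisplacement (ν k) τ := by
        rw [mixHead, avgDisplacement_smul, avgDisplacement_finset_sum
          (π := fun k => (2 : ℝ)⁻¹ ^ (k + 1) • ν k) _ fun k _ x =>
          mul_nonneg (by positivity) ((hν k).nonneg x)]
        simp only [avgDisplacement_smul]
    _ ≤ ‖(1 - (2 : ℝ)⁻¹ ^ (M + 1))⁻¹‖ₑ
        * ∑ k ∈ Finset.range (M + 1), ‖(2 : ℝ)⁻¹ ^ (k + 1)‖ₑ * ε := by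
        gcongr with k hk
        exact h k (Nat.lt_succ_iff.1 (Finset.mem_range.1 hk))
    _ = ε := by rw [← Finset.sum_mul, ← mul_assoc, hmass, one_mul]

theorem avgDisplacement_mix_le {π : G → ℝ} {ν : ℕ → G → ℝ} (hν : ∀ k, IsProbMeasure (ν k))
    {ε : ℝ≥0∞} (h : ∀ k, avgDisplacement π (ν k) ≤ ε) : avgDisplacement π (mix ν) ≤ ε := by
  have hx : ∀ x, l1Norm (leftTranslate x (mix ν) - mix ν)
      ≤ ∑' k, ‖(2 : ℝ)⁻¹ ^ (k + 1)‖ₑ * l1Norm (leftTranslate x (ν k) - ν k) := fun x => by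
    have : leftTranslate x (mix ν) - mix ν
        = fun h => ∑' k, ((2 : ℝ)⁻¹ ^ (k + 1) • (leftTranslate x (ν k) - ν k)) h := by
      funext h
      simp only [Pi.sub_apply, mix, leftTranslate, Pi.smul_apply, smul_eq_mul, mul_sub]
      exact ((summable_mix_apply hν _).tsum_sub (summable_mix_apply hν _)).symm
    rw [this]
    exact (l1Norm_tsum_le _).trans_eq (by simp only [l1Norm_smul])
  calc avgDisplacement π (mix ν)
      ≤ ∑' x, ‖π x‖ₑ * ∑' k, ‖(2 : ℝ)⁻¹ ^ (k + 1)‖ₑ * l1Norm (leftTranslate x (ν k) - ν k) :=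
        ENNReal.tsum_le_tsum fun x => by gcongr; exact hx x
    _ = ∑' k, ‖(2 : ℝ)⁻¹ ^ (k + 1)‖ₑ * avgDisplacement π (ν k) := by
        simp only [avgDisplacement, ← ENNReal.tsum_mul_left]
        rw [ENNReal.tsum_comm]
        simp only [mul_left_comm]
    _ ≤ ∑' k, ‖(2 : ℝ)⁻¹ ^ (k + 1)‖ₑ * ε := ENNReal.tsum_le_tsum fun k => by gcongr; exact h k
    _ = ε := by rw [ENNReal.tsum_mul_right, tsum_enorm_two_inv_pow_succ, one_mul]

theorem tendsto_avgDisplacement {π : G → ℝ} {lam : ℕ → G → ℝ}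
    (hπ : IsProbMeasure π) (hlam : ∀ n, IsProbMeasure (lam n))
    (hinv : ∀ x, Tendsto (fun n => l1Norm (leftTranslate x (lam n) - lam n)) atTop (𝓝 0)) :
    Tendsto (fun n => avgDisplacement π (lam n)) atTop (𝓝 0) := by
  let _ : MeasurableSpace G := ⊤
  have hfin : ∫⁻ x, ‖π x‖ₑ * 2 ∂MeasureTheory.Measure.count ≠ ∞ := by
    rw [MeasureTheory.lintegral_count, ENNReal.tsum_mul_right]
    exact ENNReal.mul_ne_top (by simpa [l1Norm] using hπ.l1Norm_eq_one.trans_ne ENNReal.one_ne_top)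
      ENNReal.ofNat_ne_top
  have := MeasureTheory.tendsto_lintegral_of_dominated_convergence
    (F := fun n x => ‖π x‖ₑ * l1Norm (leftTranslate x (lam n) - lam n)) (f := fun _ => 0)
    (fun x => ‖π x‖ₑ * 2) (fun _ => measurable_from_top)
    (fun n => MeasureTheory.ae_of_all _ fun x => by
      show ‖π x‖ₑ * _ ≤ ‖π x‖ₑ * 2
      gcongr
      exact ((hlam n).comp_leftTranslate x).l1Norm_sub_le_two (hlam n))
    hfin (MeasureTheory.ae_of_all _ fun x => by
      simpa using ENNReal.Tendsto.const_mul (hinv x) (Or.inr enorm_ne_top))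
  simpa [MeasureTheory.lintegral_count, avgDisplacement] using this

end Displacement

section Construction

variable {G : Type*} [Group G]

theorem exists_seq_avgDisplacement_le (hR : ReiterCondition G)
    {η : G → ℝ} (hη : IsProbMeasure η) :
    ∃ ν : ℕ → G → ℝ, (∀ k, IsProbMeasure (ν k)) ∧ ν 0 = η ∧ ∀ k M l, k ≤ M → M < l →
      avgDisplacement (ν k) (ν l) ≤ ENNReal.ofReal (((2 : ℝ)⁻¹ ^ (M + 1)) ^ 2) := by
  obtain ⟨lam, hlam, hinv⟩ := hR
  -- Prepending `η` keeps the approximate invariance and makes `η` the first term of the sequence.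
  let lam' : ℕ → G → ℝ := fun n => Nat.casesOn n η lam
  have hlam' : ∀ n, IsProbMeasure (lam' n) := by rintro (_ | n); exacts [hη, hlam n]
  have hdisp : ∀ i, Tendsto (fun n => avgDisplacement (lam' i) (lam' n)) atTop (𝓝 0) := fun i =>
    (tendsto_add_atTop_iff_nat 1).1 <| tendsto_avgDisplacement (hlam' i) hlam fun x =>
      (tendsto_tsum_abs_iff_tendsto_l1Norm fun n =>
        ((hlam n).comp_leftTranslate x).l1Norm_sub_ne_top (hlam n)).1 (hinv x)
  obtain ⟨φ, hφ0, hφ⟩ := exists_forall_le_of_tendsto hdisp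
    (δ := fun M => ENNReal.ofReal (((2 : ℝ)⁻¹ ^ (M + 1)) ^ 2)) (fun M => by simp)
    fun M N hMN => ENNReal.ofReal_le_ofReal <| pow_le_pow_left₀ (by positivity)
      (pow_le_pow_of_le_one (by norm_num) (by norm_num) (by omega)) 2
  exact ⟨fun k => lam' (φ k), fun k => hlam' _, by simp [hφ0, lam'], hφ⟩

theorem l1Norm_leftTranslate_convPow_mix_le {ν : ℕ → G → ℝ}
    (hν : ∀ k, IsProbMeasure (ν k)) {M : ℕ} {ε : ℝ} (hε0 : 0 ≤ ε)
    (h : ∀ k l, k ≤ M → M < l → avgDisplacement (ν k) (ν l) ≤ ENNReal.ofReal ε)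
    {g : G} (hg : 0 < ν 0 g) (n : ℕ) :
    l1Norm (leftTranslate g (convPow (mix ν) n) - convPow (mix ν) n)
      ≤ ENNReal.ofReal (4 * (1 - 2⁻¹ ^ (M + 1)) ^ n + 2 * (ε / 2⁻¹ ^ (M + 1)) + ε / ν 0 g) := by
  set σ := mix fun j => ν (j + (M + 1))
  have hσ : IsProbMeasure σ := .mix fun j => hν _
  have hσD : ∀ k ≤ M, avgDisplacement (ν k) σ ≤ ENNReal.ofReal ε := fun k hk =>
    avgDisplacement_mix_le (fun j => hν _) fun j => h k _ hk (by omega)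
  have hρσ : l1Norm (conv (mixHead ν M) σ - σ) ≤ ENNReal.ofReal ε :=
    (l1Norm_conv_sub_le_avgDisplacement (.mixHead hν M) hσ).trans
      (avgDisplacement_mixHead_le hν M hσD)
  -- `ν 0` is part of the head, so `σ` is also nearly invariant under every `g` charged by `ν 0`.
  have hgσ : l1Norm (leftTranslate g σ - σ) ≤ ENNReal.ofReal (ε / ν 0 g) := by
    rw [ENNReal.ofReal_div_of_pos hg, ENNReal.le_div_iff_mul_le (by simp [hg]) (by simp), mul_comm,
      ← Real.enorm_of_nonneg hg.le]
    exact (enorm_mul_l1Norm_le_avgDisplacement _ _ g).trans (hσD 0 (Nat.zero_le M))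
  have ht0 : (0 : ℝ) < 2⁻¹ ^ (M + 1) := by positivity
  have ht1 : (2 : ℝ)⁻¹ ^ (M + 1) ≤ 1 := pow_le_one₀ (by norm_num) (by norm_num)
  calc _ ≤ _ := l1Norm_leftTranslate_convPow_sub_le (.mixHead hν M) hσ ht0 ht1 hε0
        (mix_eq_mixHead_add_mix hν M) hρσ g n
    _ ≤ _ := by
        rw [ENNReal.ofReal_add (by positivity) (div_nonneg hε0 hg.le)]
        gcongr

theorem tendsto_tsum_abs_leftTranslate_convPow_mix {ν : ℕ → G → ℝ}
    (hν : ∀ k, IsProbMeasure (ν k)) (hdisp : ∀ k M l, k ≤ M → M < l →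
      avgDisplacement (ν k) (ν l) ≤ ENNReal.ofReal (((2 : ℝ)⁻¹ ^ (M + 1)) ^ 2))
    {g : G} (hg : 0 < ν 0 g) :
    Tendsto (fun n => ∑' h, |convPow (mix ν) n (g⁻¹ * h) - convPow (mix ν) n h|) atTop (𝓝 0) := by
  set t : ℕ → ℝ := fun M => (2 : ℝ)⁻¹ ^ (M + 1)
  have ht0 : ∀ M, 0 < t M := fun M => by positivity
  have ht1 : ∀ M, t M < 1 := fun M => pow_lt_one₀ (by norm_num) (by norm_num) (by omega)
  have ht : Tendsto t atTop (𝓝 0) :=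
    (tendsto_pow_atTop_nhds_zero_of_lt_one (by norm_num) (by norm_num)).comp
      (tendsto_add_atTop_nat 1)
  refine tendsto_zero_of_forall_le_add (fun _ => tsum_nonneg fun _ => abs_nonneg _)
    (b := fun M n => 4 * (1 - t M) ^ n) (c := fun M => 2 * t M + t M ^ 2 / ν 0 g)
    (fun M => by simpa using (tendsto_pow_atTop_nhds_zero_of_lt_one (r := 1 - t M)
      (by linarith [ht1 M]) (by linarith [ht0 M])).const_mul 4)
    (by simpa using (ht.const_mul 2).add ((ht.pow 2).div_const (ν 0 g))) fun M n => ?_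
  refine (l1Norm_toReal (leftTranslate g (convPow (mix ν) n) - convPow (mix ν) n)).symm.trans_le <|
    ENNReal.toReal_le_of_le_ofReal
    (by have := ht1 M; have := ht0 M; positivity) ?_
  refine (l1Norm_leftTranslate_convPow_mix_le hν (sq_nonneg _) (fun k l => hdisp k M l) hg
    n).trans_eq ?_
  have htM : t M ^ 2 / t M = t M := by field_simp [(ht0 M).ne']
  simp only [t] at htM ⊢
  rw [htM]
  ring_nf

end Construction

/-- A countable discrete group satisfies Reiter's condition iff there is a probability
measure `μ` whose support generates `G` and whose convolution powers are approximatively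
invariant: `‖g μ^{*n} − μ^{*n}‖ → 0` for every `g ∈ G`. -/
theorem reiter_iff_exists_approx_invariant_convolution_powers
    {G : Type*} [Group G] [Countable G] :
    ReiterCondition G ↔
    ∃ μ : G → ℝ, IsProbMeasure μ ∧
      Subgroup.closure {g : G | 0 < μ g} = ⊤ ∧
      ∀ g : G,
        Tendsto (fun n => ∑' h, |convPow μ n (g⁻¹ * h) - convPow μ n h|) atTop (𝓝 0) := by
  constructor
  · intro hR
    obtain ⟨η, hη, hη_pos⟩ := exists_isProbMeasure_forall_pos G
    obtain ⟨ν, hν, rfl, hdisp⟩ := exists_seq_avgDisplacement_le hR hη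
    refine ⟨mix ν, .mix hν, ?_, fun g => tendsto_tsum_abs_leftTranslate_convPow_mix hν hdisp
      (hη_pos g)⟩
    rw [show {g : G | 0 < mix ν g} = Set.univ from
      Set.eq_univ_of_forall fun g => mix_pos hν (hη_pos g), Subgroup.closure_univ]
  · rintro ⟨μ, hμ, -, hconv⟩
    exact ⟨convPow μ, hμ.convPow, hconv⟩
end

section
/- Let μ be a probability measure on a countable discrete group G whose support generates G as a group, and suppose that ‖gμ^{*n} − μ^{*(n+1)}‖ → 0 as n → ∞ for every g in the support of μ. Then the Cesaro averages λ_n = (1/(n+1)) ∑_{k=0}^{n} μ^{*k} form a Reiter sequence: ‖gλ_n − λ_n‖ → 0 for every g ∈ G; in particular G satisfies Reiter's condition. -/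
open Filter Topology
open scoped Classical

/-- The Cesaro averages `λ_n = (1/(n+1)) ∑_{k=0}^n μ^{*k}` of the convolution powers. -/
noncomputable def cesaro {G : Type*} [Group G] (μ : G → ℝ) (n : ℕ) : G → ℝ :=
  fun h => (1 / (n + 1 : ℝ)) * ∑ k ∈ Finset.range (n + 1), convPow μ k h

namespace ReiterAux

variable {G : Type*} [Group G] [Countable G]

lemma tsum_translate (f : G → ℝ) (g : G) : ∑' h, f (g * h) = ∑' h, f h :=
  (Equiv.mulLeft g).tsum_eq f

lemma summable_translate {f : G → ℝ} (hf : Summable f) (g : G) :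
    Summable fun h => f (g * h) :=
  ((Equiv.mulLeft g).summable_iff (f := f)).2 hf

lemma probSummable {μ : G → ℝ} (h : IsProbMeasure μ) : Summable μ :=
  h.2.summable

lemma probTsum {μ : G → ℝ} (h : IsProbMeasure μ) : ∑' g, μ g = 1 :=
  h.2.tsum_eq

lemma probLeOne {μ : G → ℝ} (h : IsProbMeasure μ) (g : G) : μ g ≤ 1 :=
  le_hasSum h.2 g fun i _ => h.1 i

lemma summable_absdiff {f f' : G → ℝ} (hf : Summable f) (hf' : Summable f') :
    Summable fun h => |f h - f' h| :=
  Summable.of_nonneg_of_le (fun _ => abs_nonneg _) (fun h => abs_sub (f h) (f' h))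
    (hf.abs.add hf'.abs)

lemma isProbMeasure_conv {μ ν : G → ℝ} (hμ : IsProbMeasure μ) (hν : IsProbMeasure ν) :
    IsProbMeasure (conv μ ν) := by
  have hfib : ∀ g, Summable fun h => μ h * ν (h⁻¹ * g) := by
    intro g
    refine Summable.of_nonneg_of_le (fun h => mul_nonneg (hμ.1 h) (hν.1 _))
      (fun h => ?_) (probSummable hμ)
    calc μ h * ν (h⁻¹ * g) ≤ μ h * 1 :=
          mul_le_mul_of_nonneg_left (probLeOne hν _) (hμ.1 h)
      _ = μ h := mul_one _
  set Fs : G × G → ℝ := fun p => μ p.1 * ν (p.1⁻¹ * p.2) with hFsdef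
  have hFsnn : 0 ≤ Fs := fun p => mul_nonneg (hμ.1 _) (hν.1 _)
  have hrow : ∀ h : G, Summable fun g => Fs (h, g) := fun h =>
    (summable_translate (probSummable hν) h⁻¹).mul_left (μ h)
  have hrowsum : ∀ h : G, (∑' g, Fs (h, g)) = μ h := by
    intro h
    simp only [hFsdef]
    rw [tsum_mul_left, tsum_translate ν h⁻¹, (probTsum hν), mul_one]
  have hFs_sum : Summable Fs := by
    refine (summable_prod_of_nonneg hFsnn).2 ⟨hrow, ?_⟩
    exact (probSummable hμ).congr fun h => (hrowsum h).symm
  have htsumFs : ∑' p, Fs p = 1 := by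
    rw [Summable.tsum_prod' hFs_sum hrow]
    calc ∑' (h : G) (g : G), Fs (h, g) = ∑' h, μ h := by
          exact tsum_congr fun h => hrowsum h
      _ = 1 := (probTsum hμ)
  have hF_sum : Summable fun p : G × G => Fs (p.2, p.1) :=
    ((Equiv.prodComm G G).summable_iff (f := Fs)).2 hFs_sum
  have hF1 : HasSum (fun p : G × G => Fs (p.2, p.1)) 1 := by
    have h2 : ∑' p : G × G, Fs (p.2, p.1) = 1 := by
      rw [← htsumFs]
      exact (Equiv.prodComm G G).tsum_eq Fs
    simpa [h2] using hF_sum.hasSum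
  refine ⟨fun g => tsum_nonneg fun h => mul_nonneg (hμ.1 h) (hν.1 _), ?_⟩
  exact hF1.prod_fiberwise fun g => (hfib g).hasSum

lemma isProbMeasure_convPow {μ : G → ℝ} (hμ : IsProbMeasure μ) :
    ∀ n, IsProbMeasure (convPow μ n)
  | 0 => ⟨fun g => by dsimp [convPow]; split <;> norm_num,
      by simpa [convPow] using hasSum_ite_eq (1 : G) (1 : ℝ)⟩
  | n + 1 => isProbMeasure_conv (isProbMeasure_convPow hμ n) hμ

lemma isProbMeasure_cesaro {μ : G → ℝ} (hμ : IsProbMeasure μ) (n : ℕ) :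
    IsProbMeasure (cesaro μ n) := by
  constructor
  · intro g
    refine mul_nonneg (by positivity) ?_
    exact Finset.sum_nonneg fun k _ => (isProbMeasure_convPow hμ k).1 g
  · have h1 : HasSum (fun h => ∑ k ∈ Finset.range (n + 1), convPow μ k h)
        ((n + 1 : ℝ)) := by
      have := hasSum_sum (s := Finset.range (n + 1)) (f := fun k h => convPow μ k h)
        (a := fun _ => (1 : ℝ)) (fun k _ => (isProbMeasure_convPow hμ k).2)
      simpa using this
    have h2 := h1.mul_left (1 / (n + 1 : ℝ))
    have h3 : (1 / (n + 1 : ℝ)) * (n + 1 : ℝ) = 1 := by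
      rw [one_div, inv_mul_cancel₀]
      positivity
    rw [h3] at h2
    exact h2

lemma summable_cesaro {μ : G → ℝ} (hμ : IsProbMeasure μ) (n : ℕ) :
    Summable (cesaro μ n) :=
  (isProbMeasure_cesaro hμ n).2.summable

/-- Main estimate for a generator `g` in the support. -/
lemma support_tendsto {μ : G → ℝ} (hμ : IsProbMeasure μ) (g : G)
    (hg : Tendsto (fun n => ∑' h, |convPow μ n (g⁻¹ * h) - convPow μ (n + 1) h|)
      atTop (𝓝 0)) :
    Tendsto (fun n => ∑' h, |cesaro μ n (g⁻¹ * h) - cesaro μ n h|) atTop (𝓝 0) := by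
  have hP : ∀ k, IsProbMeasure (convPow μ k) := isProbMeasure_convPow hμ
  set a : ℕ → ℝ := fun k => ∑' h, |convPow μ k (g⁻¹ * h) - convPow μ (k + 1) h| with hadef
  have hb_summ : ∀ k, Summable fun h => |convPow μ k (g⁻¹ * h) - convPow μ (k + 1) h| :=
    fun k => summable_absdiff (summable_translate (hP k).2.summable g⁻¹) (hP (k + 1)).2.summable
  have ha_nonneg : ∀ k, 0 ≤ a k := fun k => tsum_nonneg fun h => abs_nonneg _
  -- pointwise bound
  have key : ∀ n, (∑' h, |cesaro μ n (g⁻¹ * h) - cesaro μ n h|) ≤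
      (1 / (n + 1 : ℝ)) * ((∑ k ∈ Finset.range (n + 1), a k) + 2) := by
    intro n
    have hpos : (0 : ℝ) ≤ 1 / (n + 1 : ℝ) := by positivity
    have hpt : ∀ h, |cesaro μ n (g⁻¹ * h) - cesaro μ n h| ≤
        (1 / (n + 1 : ℝ)) *
          ((∑ k ∈ Finset.range (n + 1), |convPow μ k (g⁻¹ * h) - convPow μ (k + 1) h|)
            + (convPow μ (n + 1) h + convPow μ 0 h)) := by
      intro h
      have e1 : cesaro μ n (g⁻¹ * h) - cesaro μ n h =
          (1 / (n + 1 : ℝ)) *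
            ∑ k ∈ Finset.range (n + 1), (convPow μ k (g⁻¹ * h) - convPow μ k h) := by
        simp only [cesaro]
        rw [Finset.sum_sub_distrib, mul_sub]
      rw [e1, abs_mul, abs_of_nonneg hpos]
      refine mul_le_mul_of_nonneg_left ?_ hpos
      have e2 : ∑ k ∈ Finset.range (n + 1), (convPow μ k (g⁻¹ * h) - convPow μ k h) =
          (∑ k ∈ Finset.range (n + 1), (convPow μ k (g⁻¹ * h) - convPow μ (k + 1) h))
            + (convPow μ (n + 1) h - convPow μ 0 h) := by
        rw [← Finset.sum_range_sub (fun k => convPow μ k h) (n + 1),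
          ← Finset.sum_add_distrib]
        apply Finset.sum_congr rfl
        intro k _
        ring
      rw [e2]
      calc |(∑ k ∈ Finset.range (n + 1), (convPow μ k (g⁻¹ * h) - convPow μ (k + 1) h))
            + (convPow μ (n + 1) h - convPow μ 0 h)| ≤
          |∑ k ∈ Finset.range (n + 1), (convPow μ k (g⁻¹ * h) - convPow μ (k + 1) h)|
            + |convPow μ (n + 1) h - convPow μ 0 h| := abs_add_le _ _
        _ ≤ (∑ k ∈ Finset.range (n + 1), |convPow μ k (g⁻¹ * h) - convPow μ (k + 1) h|)
            + (convPow μ (n + 1) h + convPow μ 0 h) := by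
            gcongr
            · exact Finset.abs_sum_le_sum_abs _ _
            · refine (abs_sub _ _).trans ?_
              rw [abs_of_nonneg ((hP (n + 1)).1 h), abs_of_nonneg ((hP 0).1 h)]
    -- summability of the majorant
    have hmaj_summ : Summable fun h =>
        (∑ k ∈ Finset.range (n + 1), |convPow μ k (g⁻¹ * h) - convPow μ (k + 1) h|)
          + (convPow μ (n + 1) h + convPow μ 0 h) :=
      (summable_sum fun k _ => hb_summ k).add ((hP (n + 1)).2.summable.add (hP 0).2.summable)
    have hlhs_summ : Summable fun h => |cesaro μ n (g⁻¹ * h) - cesaro μ n h| :=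
      summable_absdiff (summable_translate (summable_cesaro hμ n) g⁻¹) (summable_cesaro hμ n)
    calc (∑' h, |cesaro μ n (g⁻¹ * h) - cesaro μ n h|) ≤
        ∑' h, (1 / (n + 1 : ℝ)) *
          ((∑ k ∈ Finset.range (n + 1), |convPow μ k (g⁻¹ * h) - convPow μ (k + 1) h|)
            + (convPow μ (n + 1) h + convPow μ 0 h)) :=
          Summable.tsum_le_tsum hpt hlhs_summ (hmaj_summ.mul_left _)
      _ = (1 / (n + 1 : ℝ)) * ((∑ k ∈ Finset.range (n + 1), a k) + 2) := by
          rw [tsum_mul_left]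
          congr 1
          rw [Summable.tsum_add (summable_sum fun k _ => hb_summ k)
            ((hP (n + 1)).2.summable.add (hP 0).2.summable),
            Summable.tsum_finsetSum fun k _ => hb_summ k,
            Summable.tsum_add (hP (n + 1)).2.summable (hP 0).2.summable,
            (hP (n + 1)).2.tsum_eq, (hP 0).2.tsum_eq]
          simp only [hadef]
          norm_num
  -- the majorant tends to 0
  have hc : Tendsto (fun n : ℕ => (1 / ((n : ℝ) + 1)) *
      ((∑ k ∈ Finset.range (n + 1), a k) + 2)) atTop (𝓝 0) := by
    have h1 : Tendsto (fun n : ℕ => (1 / ((n : ℝ) + 1)) *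
        ∑ k ∈ Finset.range (n + 1), a k) atTop (𝓝 0) := by
      have := hg.cesaro
      have h2 := this.comp (tendsto_add_atTop_nat 1)
      refine h2.congr fun n => ?_
      simp only [Function.comp_apply]
      push_cast
      rw [one_div]
    have h3 : Tendsto (fun n : ℕ => (1 / ((n : ℝ) + 1)) * 2) atTop (𝓝 0) := by
      simpa using tendsto_one_div_add_atTop_nhds_zero_nat.mul_const (2 : ℝ)
    have := h1.add h3
    rw [add_zero] at this
    refine this.congr fun n => ?_
    ring
  refine squeeze_zero (fun n => tsum_nonneg fun h => abs_nonneg _) key hc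

end ReiterAux

/-- The "zero part" of the 0–2 law: if the support of `μ` generates `G` and
`‖g μ^{*n} − μ^{*(n+1)}‖ → 0` for all `g` in the support of `μ`, then the Cesaro averages
of the convolution powers form a Reiter sequence, so `G` satisfies Reiter's condition. -/
theorem cesaro_averages_form_reiter_sequence
    {G : Type*} [Group G] [Countable G] (μ : G → ℝ)
    (hμ : IsProbMeasure μ)
    (hgen : Subgroup.closure {g : G | 0 < μ g} = ⊤)
    (htail : ∀ g : G, 0 < μ g →
      Tendsto (fun n => ∑' h, |convPow μ n (g⁻¹ * h) - convPow μ (n + 1) h|) atTop (𝓝 0)) :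
    (∀ n, IsProbMeasure (cesaro μ n)) ∧
    (∀ g : G,
      Tendsto (fun n => ∑' h, |cesaro μ n (g⁻¹ * h) - cesaro μ n h|) atTop (𝓝 0)) ∧
    ReiterCondition G := by
  have hprob : ∀ n, IsProbMeasure (cesaro μ n) := ReiterAux.isProbMeasure_cesaro hμ
  have hsumm : ∀ n, Summable (cesaro μ n) := fun n => (hprob n).2.summable
  have htrans : ∀ (n : ℕ) (g : G), Summable fun h => cesaro μ n (g * h) :=
    fun n g => ReiterAux.summable_translate (hsumm n) g
  have habs : ∀ (n : ℕ) (g : G), Summable fun h => |cesaro μ n (g * h) - cesaro μ n h| :=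
    fun n g => ReiterAux.summable_absdiff (htrans n g) (hsumm n)
  -- the set of good elements is a subgroup
  let S : Subgroup G :=
    { carrier := {g : G |
        Tendsto (fun n => ∑' h, |cesaro μ n (g⁻¹ * h) - cesaro μ n h|) atTop (𝓝 0)}
      one_mem' := by
        simp only [Set.mem_setOf_eq, inv_one, one_mul, sub_self, abs_zero, tsum_zero]
        exact tendsto_const_nhds
      mul_mem' := by
        intro g₁ g₂ hg₁ hg₂
        simp only [Set.mem_setOf_eq] at *
        have hbound : ∀ n, (∑' h, |cesaro μ n ((g₁ * g₂)⁻¹ * h) - cesaro μ n h|) ≤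
            (∑' h, |cesaro μ n (g₂⁻¹ * h) - cesaro μ n h|)
              + ∑' h, |cesaro μ n (g₁⁻¹ * h) - cesaro μ n h| := by
          intro n
          have step1 : (∑' h, |cesaro μ n ((g₁ * g₂)⁻¹ * h) - cesaro μ n h|) ≤
              (∑' h, |cesaro μ n ((g₁ * g₂)⁻¹ * h) - cesaro μ n (g₁⁻¹ * h)|)
                + ∑' h, |cesaro μ n (g₁⁻¹ * h) - cesaro μ n h| := by
            have := Summable.tsum_le_tsum (f := fun h => |cesaro μ n ((g₁ * g₂)⁻¹ * h) - cesaro μ n h|)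
              (g := fun h => |cesaro μ n ((g₁ * g₂)⁻¹ * h) - cesaro μ n (g₁⁻¹ * h)|
                + |cesaro μ n (g₁⁻¹ * h) - cesaro μ n h|)
              (fun h => abs_sub_le _ _ _) (habs n _)
              ((ReiterAux.summable_absdiff
                  (ReiterAux.summable_translate (hsumm n) (g₁ * g₂)⁻¹) (htrans n g₁⁻¹)).add
                (habs n _))
            rwa [Summable.tsum_add (ReiterAux.summable_absdiff
                (ReiterAux.summable_translate (hsumm n) (g₁ * g₂)⁻¹) (htrans n g₁⁻¹))
              (habs n _)] at this
          have step2 : (∑' h, |cesaro μ n ((g₁ * g₂)⁻¹ * h) - cesaro μ n (g₁⁻¹ * h)|) =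
              ∑' h, |cesaro μ n (g₂⁻¹ * h) - cesaro μ n h| := by
            rw [← ReiterAux.tsum_translate
              (fun h => |cesaro μ n (g₂⁻¹ * h) - cesaro μ n h|) g₁⁻¹]
            apply tsum_congr
            intro h
            congr 2 <;> group
          rw [step2] at step1
          exact step1
        have hlim := hg₂.add hg₁
        rw [add_zero] at hlim
        exact squeeze_zero (fun n => tsum_nonneg fun h => abs_nonneg _) hbound hlim
      inv_mem' := by
        intro g hg
        simp only [Set.mem_setOf_eq, inv_inv] at *
        refine hg.congr fun n => ?_
        rw [← ReiterAux.tsum_translate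
          (fun h => |cesaro μ n (g⁻¹ * h) - cesaro μ n h|) g]
        apply tsum_congr
        intro h
        rw [abs_sub_comm]
        congr 2 <;> group }
  have hsupp : {g : G | 0 < μ g} ⊆ (S : Set G) := by
    intro g hg
    exact ReiterAux.support_tendsto hμ g (htail g hg)
  have hall : ∀ g : G, g ∈ S := by
    have hle : Subgroup.closure {g : G | 0 < μ g} ≤ S := (Subgroup.closure_le S).2 hsupp
    rw [hgen] at hle
    exact fun g => hle (Subgroup.mem_top g)
  have hmain : ∀ g : G,
      Tendsto (fun n => ∑' h, |cesaro μ n (g⁻¹ * h) - cesaro μ n h|) atTop (𝓝 0) :=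
    fun g => hall g
  exact ⟨hprob, hmain, ⟨cesaro μ, hprob, hmain⟩⟩
end

section
/- The free group F₂ on two generators does not satisfy Reiter's condition: there is no sequence (λ_n) of probability measures on F₂ such that ‖gλ_n − λ_n‖ → 0 for every g ∈ F₂. -/
open Filter Topology

namespace NotReiterAux

abbrev F2 := FreeGroup (Fin 2)

/-- Words whose reduced form starts with letter (x, b). -/
def W (x : Fin 2) (b : Bool) : Set F2 := {g | g.toWord.head? = some (x, b)}

lemma cons_toWord (x : Fin 2) (b : Bool) (g : F2)
    (h : g.toWord.head? ≠ some (x, !b)) :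
    (FreeGroup.mk [(x, b)] * g).toWord = (x, b) :: g.toWord := by
  conv_lhs => rw [← FreeGroup.mk_toWord (x := g)]
  rw [FreeGroup.mul_mk, FreeGroup.toWord_mk, List.singleton_append, FreeGroup.reduce.cons,
    FreeGroup.reduce_toWord]
  cases hw : g.toWord with
  | nil => rfl
  | cons hd tl =>
    simp only []
    rw [if_neg]
    rintro ⟨h1, h2⟩
    obtain ⟨y, c⟩ := hd
    simp only at h1 h2
    subst h1
    apply h
    rw [hw]
    simp [h2]

lemma mk_cancel (x : Fin 2) : FreeGroup.mk [(x, true)] * FreeGroup.mk [(x, false)] = (1 : F2) := by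
  rw [FreeGroup.mul_mk, FreeGroup.one_eq_mk]
  apply FreeGroup.reduce.exact
  simp [FreeGroup.reduce]

lemma half (μ : F2 → ℝ) (hpos : ∀ g, 0 ≤ μ g) (hsum : HasSum μ 1) (x : Fin 2) :
    (1 : ℝ) ≤ (∑' h : W x true, μ h) + (∑' h : W x false, μ h)
      + ∑' h, |μ (FreeGroup.mk [(x, true)] * h) - μ h| := by
  have hμ : Summable μ := hsum.summable
  set a : F2 := FreeGroup.mk [(x, true)] with ha
  set Wc : Set F2 := (W x true)ᶜ with hWc
  have hν : Summable (fun h => μ (a * h)) :=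
    hμ.comp_injective (mul_right_injective a)
  have habs : Summable (fun h => |μ (a * h) - μ h|) := ((hν.sub hμ).abs)
  -- split total mass over W x true and its complement
  have hsplit : (∑' h : W x true, μ h) + (∑' h : Wc, μ h) = 1 := by
    rw [hWc, Summable.tsum_add_tsum_compl (hμ.subtype _) (hμ.subtype _), hsum.tsum_eq]
  -- complement embeds into a • (W x false)
  have hmem : ∀ h : Wc, (FreeGroup.mk [(x, false)] * (h : F2)) ∈ W x false := by
    intro h
    have h2 := h.2
    simp only [hWc, Set.mem_compl_iff, W, Set.mem_setOf_eq] at h2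
    have hh : (h : F2).toWord.head? ≠ some (x, !false) := by simpa using h2
    have := cons_toWord x false (h : F2) hh
    simp [W, Set.mem_setOf_eq, this]
  have hcomp : (∑' h : Wc, μ h) ≤ ∑' k : W x false, μ (a * k) := by
    refine Summable.tsum_le_tsum_of_inj
      (fun h : Wc => (⟨FreeGroup.mk [(x, false)] * h, hmem h⟩ : W x false))
      ?_ (fun c _ => hpos _) (fun h => ?_) (hμ.subtype _) (hν.subtype _)
    · intro h1 h2 hval
      have heq : FreeGroup.mk [(x, false)] * (h1 : F2) = FreeGroup.mk [(x, false)] * (h2 : F2) := by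
        exact_mod_cast congrArg Subtype.val hval
      exact Subtype.ext (mul_left_cancel heq)
    · have heq : a * (FreeGroup.mk [(x, false)] * (h : F2)) = (h : F2) := by
        rw [← mul_assoc, mk_cancel, one_mul]
      simp [heq]
  -- translate bound
  have htrans : (∑' k : W x false, μ (a * k))
      ≤ (∑' k : W x false, μ k) + ∑' h, |μ (a * h) - μ h| := by
    have h1 : (∑' k : W x false, μ (a * k))
        ≤ ∑' k : W x false, (μ k + |μ (a * k) - μ k|) := by
      refine Summable.tsum_le_tsum (fun k => ?_) (hν.subtype _) ((hμ.subtype _).add (habs.subtype _))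
      have : μ (a * (k : F2)) - μ k ≤ |μ (a * (k : F2)) - μ k| := le_abs_self _
      linarith
    have h2 : (∑' k : W x false, (μ k + |μ (a * k) - μ k|))
        = (∑' k : W x false, μ k) + ∑' k : W x false, |μ (a * k) - μ k| :=
      Summable.tsum_add (hμ.subtype _) (habs.subtype _)
    have h3 : (∑' k : W x false, |μ (a * k) - μ k|) ≤ ∑' h, |μ (a * h) - μ h| :=
      Summable.tsum_subtype_le _ _ (fun _ => abs_nonneg _) habs
    linarith
  linarith

lemma disjoint_bound (μ : F2 → ℝ) (hpos : ∀ g, 0 ≤ μ g) (hsum : HasSum μ 1) :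
    (∑' h : W 0 true, μ h) + (∑' h : W 0 false, μ h)
      + ((∑' h : W 1 true, μ h) + (∑' h : W 1 false, μ h)) ≤ 1 := by
  have hμ : Summable μ := hsum.summable
  have hind : ∀ (x : Fin 2) (b : Bool), (∑' h : W x b, μ h) = ∑' h, (W x b).indicator μ h := by
    intro x b; exact (tsum_subtype _ _)
  rw [hind, hind, hind, hind,
    ← Summable.tsum_add (hμ.indicator _) (hμ.indicator _),
    ← Summable.tsum_add (hμ.indicator _) (hμ.indicator _),
    ← Summable.tsum_add ((hμ.indicator _).add (hμ.indicator _)) ((hμ.indicator _).add (hμ.indicator _))]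
  rw [← hsum.tsum_eq]
  refine Summable.tsum_le_tsum (fun h => ?_)
    (((hμ.indicator _).add (hμ.indicator _)).add ((hμ.indicator _).add (hμ.indicator _))) hμ
  rcases ho : h.toWord.head? with _ | ⟨y, c⟩
  · simp [Set.indicator, W, Set.mem_setOf_eq, ho, hpos h]
  · fin_cases y <;> cases c <;>
      simp [Set.indicator, W, Set.mem_setOf_eq, ho, hpos h]

end NotReiterAux

/-- The free group on two generators does not satisfy Reiter's condition
(it is non-amenable). -/
theorem freeGroup_two_not_reiter : ¬ ReiterCondition (FreeGroup (Fin 2)) := by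
  rintro ⟨lam, hprob, hten⟩
  open NotReiterAux in
  have key : ∀ n, (1 : ℝ) ≤
      (∑' h, |lam n (FreeGroup.mk [((0 : Fin 2), true)] * h) - lam n h|)
      + ∑' h, |lam n (FreeGroup.mk [((1 : Fin 2), true)] * h) - lam n h| := by
    intro n
    obtain ⟨hpos, hsum⟩ := hprob n
    have h0 := NotReiterAux.half (lam n) hpos hsum 0
    have h1 := NotReiterAux.half (lam n) hpos hsum 1
    have hd := NotReiterAux.disjoint_bound (lam n) hpos hsum
    linarith
  have t0 := hten (FreeGroup.mk [((0 : Fin 2), true)])⁻¹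
  have t1 := hten (FreeGroup.mk [((1 : Fin 2), true)])⁻¹
  simp only [inv_inv] at t0 t1
  have tsum0 := t0.add t1
  simp only [add_zero] at tsum0
  have : (1 : ℝ) ≤ 0 := ge_of_tendsto' tsum0 (fun n => key n)
  linarith
end

section
/- Let G be a group, let a, b ∈ G, and let α, β be real numbers with α > 0, β > 0 and 2(α+β) = 1. In the group algebra ℝ[G], set μ₁₁ = α(b + b⁻¹), μ₁₂ = β(1 + a), μ₂₁ = β(1 + a⁻¹), μ₂₂ = 2α·1. Then the geometric series ∑_{n≥0} μ₂₂ⁿ converges to (2β)⁻¹·1 and μ₁₁ + μ₁₂ (∑_{n≥0} μ₂₂ⁿ) μ₂₁ = β·1 + (β/2)(a + a⁻¹) + α(b + b⁻¹). If moreover 2α² = β², then this element equals β·1 + (1−β)·μ, where μ = α(a + a⁻¹) + β(b + b⁻¹); that is, the measure μ is self-similar: the induced measure is the convex combination β·δ_e + (1−β)·μ. -/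
/-!
Since `μ₂₂ = 2α·1` is a scalar of norm `2α = 1 - 2β < 1`, its geometric series is the scalar
`(1 - 2α)⁻¹ = (2β)⁻¹`. As `a a⁻¹ = 1`, the product `(1 + a)(1 + a⁻¹)` collapses to
`2 + a + a⁻¹`, which gives the Schur complement. Under `2α² = β²` one has `1 - β = 2α + β`,
hence `(1 - β)α = β/2` and `(1 - β)β = α`, which is the self-similarity.
-/

open MonoidAlgebra

theorem MonoidAlgebra.hasSum_coeff_smul_one_pow {K M : Type*} [NormedField K] [Monoid M]
    {r : K} (hr : ‖r‖ < 1) (m : M) :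
    HasSum (fun n : ℕ => ((r • (1 : MonoidAlgebra K M)) ^ n).coeff m)
      (((1 - r)⁻¹ • (1 : MonoidAlgebra K M)).coeff m) := by
  simp only [smul_pow, one_pow, coeff_smul_apply, smul_eq_mul]
  exact (hasSum_geometric_of_norm_lt_one hr).mul_right _

theorem one_add_mul_one_add_of_mul_eq_one {R : Type*} [Ring R] {x y : R} (hxy : x * y = 1) :
    (1 + x) * (1 + y) = 2 + (x + y) := by
  rw [add_mul, one_mul, mul_add, mul_one, hxy, ← one_add_one_eq_two]
  abel

theorem smul_one_add_mul_smul_mul_smul_one_add {k A : Type*} [Field k] [CharZero k] [Ring A]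
    [Algebra k A] {x y : A} (hxy : x * y = 1) {β : k} (hβ : β ≠ 0) :
    (β • (1 + x)) * ((2 * β)⁻¹ • (1 : A)) * (β • (1 + y)) = β • (1 : A) + (β / 2) • (x + y) := by
  have hscalar : β * (2 * β)⁻¹ * β = β / 2 := by field_simp
  have htwo : (2 : A) = (2 : k) • (1 : A) := by rw [two_smul, one_add_one_eq_two]
  rw [smul_mul_smul_comm, mul_one, smul_mul_smul_comm, one_add_mul_one_add_of_mul_eq_one hxy,
    hscalar, smul_add, htwo, smul_smul, div_mul_cancel₀ β two_ne_zero]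

/-- The Schur-complement computation for the Basilica random walk in the group algebra
`ℝ[G]`: with `μ₁₁ = α(b+b⁻¹)`, `μ₁₂ = β(1+a)`, `μ₂₁ = β(1+a⁻¹)`, `μ₂₂ = 2α·1`, the
geometric series `∑ μ₂₂ⁿ` converges (coefficientwise) to `(2β)⁻¹·1`,
`μ₁₁ + μ₁₂ (∑ μ₂₂ⁿ) μ₂₁ = β·1 + (β/2)(a+a⁻¹) + α(b+b⁻¹)`, and if `2α² = β²` this equals
`β·1 + (1−β)μ` for `μ = α(a+a⁻¹) + β(b+b⁻¹)`: the measure `μ` is self-similar. -/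
theorem basilica_schur_complement_self_similar
    {G : Type*} [Group G] (a b : G) (α β : ℝ)
    (hα : 0 < α) (hβ : 0 < β) (hprob : 2 * (α + β) = 1) :
    (∀ g : G,
      HasSum (fun n : ℕ => (((2 * α) • (1 : MonoidAlgebra ℝ G)) ^ n).coeff g)
        (((2 * β)⁻¹ • (1 : MonoidAlgebra ℝ G)).coeff g)) ∧
    α • (MonoidAlgebra.of ℝ G b + MonoidAlgebra.of ℝ G b⁻¹)
        + (β • (1 + MonoidAlgebra.of ℝ G a)) * ((2 * β)⁻¹ • (1 : MonoidAlgebra ℝ G))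
          * (β • (1 + MonoidAlgebra.of ℝ G a⁻¹))
      = β • (1 : MonoidAlgebra ℝ G)
        + (β / 2) • (MonoidAlgebra.of ℝ G a + MonoidAlgebra.of ℝ G a⁻¹)
        + α • (MonoidAlgebra.of ℝ G b + MonoidAlgebra.of ℝ G b⁻¹) ∧
    (2 * α ^ 2 = β ^ 2 →
      α • (MonoidAlgebra.of ℝ G b + MonoidAlgebra.of ℝ G b⁻¹)
          + (β • (1 + MonoidAlgebra.of ℝ G a)) * ((2 * β)⁻¹ • (1 : MonoidAlgebra ℝ G))
            * (β • (1 + MonoidAlgebra.of ℝ G a⁻¹))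
        = β • (1 : MonoidAlgebra ℝ G)
          + (1 - β) • (α • (MonoidAlgebra.of ℝ G a + MonoidAlgebra.of ℝ G a⁻¹)
            + β • (MonoidAlgebra.of ℝ G b + MonoidAlgebra.of ℝ G b⁻¹))) := by
  have hinv : of ℝ G a * of ℝ G a⁻¹ = 1 := by rw [← map_mul, mul_inv_cancel, map_one]
  have hschur : α • (of ℝ G b + of ℝ G b⁻¹)
      + (β • (1 + of ℝ G a)) * ((2 * β)⁻¹ • (1 : MonoidAlgebra ℝ G)) * (β • (1 + of ℝ G a⁻¹))
      = β • (1 : MonoidAlgebra ℝ G) + (β / 2) • (of ℝ G a + of ℝ G a⁻¹)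
        + α • (of ℝ G b + of ℝ G b⁻¹) := by
    rw [smul_one_add_mul_smul_mul_smul_one_add hinv hβ.ne']
    abel
  refine ⟨fun g => ?_, hschur, fun hsq => ?_⟩
  · have hnorm : ‖2 * α‖ < 1 := by
      rw [Real.norm_of_nonneg (by linarith)]
      linarith
    have hsum : (2 * β)⁻¹ = (1 - 2 * α)⁻¹ := by congr 1; linarith
    rw [hsum]
    exact hasSum_coeff_smul_one_pow hnorm g
  · have hcoeff_a : β / 2 = (1 - β) * α := by nlinarith
    have hcoeff_b : α = (1 - β) * β := by nlinarith
    rw [hschur, hcoeff_a, hcoeff_b]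
    module
end
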